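/- arXiv:math/0506505 — 9 statements merged into one kernel-verified Lean document; each statement's English description precedes it below -/
import Mathlib

section
/- Let n ≥ 1 and k_1, …, k_n ≥ 1 be integers, and define f(s) = n − s − Σ_{l=1}^n 1/(1 + (s−1) + (s−1)^2 + … + (s−1)^{k_l}) for s ≥ 1. If the star-shaped graph with n branches of lengths k_1, …, k_n is a Dynkin graph, i.e. if n ≤ 2 (type A), or n = 3 and the multiset {k_1,k_2,k_3} is {1,1,m} for some m ≥ 1 (type D), {1,2,2} (type E6), {1,2,3} (type E7), or {1,2,4} (type E8), then the equation f(s) = 0 has no solution s ∈ [1, ∞). -/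
/-!
Write `t = s - 1 ≥ 0` and `w m = 1 / (1 + t + ⋯ + t^m)`, so that `f(s) = n - 1 - t - ∑ w (k l)`.
Since `w m ≥ 1 - t` and `w m > 0`, the sum exceeds `(n - 1)(1 - t)`, which settles `n ≤ 2`.
For `n = 3` the type `D` case follows from the same two bounds, and since `w` decreases in the
branch length, `E₆` and `E₇` reduce to `E₈`; there, after clearing denominators, the numerator
is the Coxeter polynomial `Φ₃₀(t)` of `E₈`, which is positive.
-/

/-- The function `f(s) = n - s - ∑_{l=1}^n 1/(1 + (s-1) + … + (s-1)^{k_l})`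
attached to the star-shaped graph with `n` branches of lengths `k 1, …, k n`. -/
noncomputable def starFun (n : ℕ) (k : Fin n → ℕ) (s : ℝ) : ℝ :=
  (n : ℝ) - s - ∑ l, (∑ j ∈ Finset.range (k l + 1), (s - 1) ^ j)⁻¹

open Finset

noncomputable def branchWeight (t : ℝ) (m : ℕ) : ℝ :=
  (∑ j ∈ range (m + 1), t ^ j)⁻¹

lemma starFun_eq (n : ℕ) (k : Fin n → ℕ) (s : ℝ) :
    starFun n k s = n - s - ∑ l, branchWeight (s - 1) (k l) := rfl

section branchWeight

variable {t : ℝ}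

lemma one_le_geom_sum (ht : 0 ≤ t) (m : ℕ) : 1 ≤ ∑ j ∈ range (m + 1), t ^ j :=
  calc (1 : ℝ) = t ^ 0 := (pow_zero t).symm
    _ ≤ ∑ j ∈ range (m + 1), t ^ j :=
      single_le_sum (fun j _ => pow_nonneg ht j) (mem_range.mpr m.succ_pos)

lemma branchWeight_pos (ht : 0 ≤ t) (m : ℕ) : 0 < branchWeight t m :=
  inv_pos.mpr (zero_lt_one.trans_le (one_le_geom_sum ht m))

/-- `(1 - t) (1 + t + ⋯ + t^m) = 1 - t^(m+1) ≤ 1`. -/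
lemma one_sub_le_branchWeight (ht : 0 ≤ t) (m : ℕ) : 1 - t ≤ branchWeight t m := by
  have hpos : 0 < ∑ j ∈ range (m + 1), t ^ j := zero_lt_one.trans_le (one_le_geom_sum ht m)
  rw [branchWeight, ← one_div, le_div_iff₀ hpos, mul_neg_geom_sum]
  linarith [pow_nonneg ht (m + 1)]

lemma branchWeight_antitone (ht : 0 ≤ t) : Antitone (branchWeight t) := by
  intro m m' hmm'
  apply inv_anti₀ (zero_lt_one.trans_le (one_le_geom_sum ht m))
  exact sum_le_sum_of_subset_of_nonneg (range_subset_range.mpr (by omega))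
    (fun j _ _ => pow_nonneg ht j)

lemma branchWeight_one : branchWeight t 1 = (1 + t)⁻¹ := by
  simp [branchWeight, sum_range_succ]

lemma branchWeight_two : branchWeight t 2 = (1 + t + t ^ 2)⁻¹ := by
  simp [branchWeight, sum_range_succ]

lemma branchWeight_four : branchWeight t 4 = (1 + t + t ^ 2 + t ^ 3 + t ^ 4)⁻¹ := by
  simp [branchWeight, sum_range_succ]

lemma sub_lt_branchWeight_typeD (ht : 0 ≤ t) (m : ℕ) :
    2 - t < branchWeight t 1 + branchWeight t 1 + branchWeight t m := by
  have hm := branchWeight_pos ht m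
  have hm' := one_sub_le_branchWeight ht m
  have h1 : (1 + t) * branchWeight t 1 = 1 := by
    rw [branchWeight_one]; exact mul_inv_cancel₀ (by positivity)
  have h1pos := branchWeight_pos ht 1
  -- `2 - t - 2 / (1 + t) = t (1 - t) / (1 + t)`, which is `< 1 - t` for `t < 1` and `≤ 0` otherwise
  rcases le_or_gt 1 t with h | h <;> nlinarith

lemma coxeterPoly_E8_pos (ht : 0 ≤ t) : 0 < 1 + t - t ^ 3 - t ^ 4 - t ^ 5 + t ^ 7 + t ^ 8 := by
  nlinarith [sq_nonneg (t ^ 4 + t ^ 3 / 2 - t - 1 / 2), sq_nonneg (t ^ 2 - t), sq_nonneg (t - 1),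
    pow_nonneg ht 3, pow_nonneg ht 5, sq_nonneg (t ^ 3 - t), mul_nonneg ht (sq_nonneg (t ^ 3 - 1)),
    mul_nonneg ht (sq_nonneg (t ^ 2 - 1))]

lemma sub_lt_branchWeight_typeE8 (ht : 0 ≤ t) :
    2 - t < branchWeight t 1 + branchWeight t 2 + branchWeight t 4 := by
  rw [branchWeight_one, branchWeight_two, branchWeight_four, ← sub_pos]
  have hden : 0 < (1 + t) * (1 + t + t ^ 2) * (1 + t + t ^ 2 + t ^ 3 + t ^ 4) := by positivity
  have hcleared : (1 + t)⁻¹ + (1 + t + t ^ 2)⁻¹ + (1 + t + t ^ 2 + t ^ 3 + t ^ 4)⁻¹ - (2 - t) =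
      (1 + t - t ^ 3 - t ^ 4 - t ^ 5 + t ^ 7 + t ^ 8) /
        ((1 + t) * (1 + t + t ^ 2) * (1 + t + t ^ 2 + t ^ 3 + t ^ 4)) := by
    field_simp
    ring
  rw [hcleared]
  exact div_pos (coxeterPoly_E8_pos ht) hden

end branchWeight

lemma starFun_lt (n : ℕ) (hn : 0 < n) (k : Fin n → ℕ) {s : ℝ} (hs : 1 ≤ s) :
    starFun n k s < (n - 2) * (s - 1) := by
  have ht : 0 ≤ s - 1 := sub_nonneg.mpr hs
  obtain ⟨n, rfl⟩ := Nat.exists_eq_succ_of_ne_zero hn.ne'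
  have hrest : ∑ l : Fin n, (1 - (s - 1)) ≤ ∑ l : Fin n, branchWeight (s - 1) (k l.succ) :=
    sum_le_sum fun l _ => one_sub_le_branchWeight ht _
  have hfirst := branchWeight_pos ht (k 0)
  rw [starFun_eq, Fin.sum_univ_succ]
  simp only [sum_const, card_univ, Fintype.card_fin, nsmul_eq_mul] at hrest
  push_cast
  nlinarith

lemma starFun_three {k : Fin 3 → ℕ} {a b c : ℕ}
    (hk : (List.ofFn k : Multiset ℕ) = {a, b, c}) (s : ℝ) :
    starFun 3 k s = 2 - (s - 1) -
      (branchWeight (s - 1) a + branchWeight (s - 1) b + branchWeight (s - 1) c) := by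
  have hsum : ∑ l, branchWeight (s - 1) (k l) =
      ((List.ofFn k : Multiset ℕ).map (branchWeight (s - 1))).sum := by
    rw [Multiset.map_coe, Multiset.sum_coe, List.map_ofFn, List.sum_ofFn, Function.comp_def]
  rw [starFun_eq, hsum, hk]
  simp only [Multiset.insert_eq_cons, Multiset.map_cons, Multiset.map_singleton,
    Multiset.sum_cons, Multiset.sum_singleton]
  ring


theorem stmt_0_general (n : ℕ) (k : Fin n → ℕ)
    (hDynkin : n ≤ 2 ∨ (n = 3 ∧
      ((∃ m : ℕ, 1 ≤ m ∧ (List.ofFn k : Multiset ℕ) = {1, 1, m}) ∨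
        (List.ofFn k : Multiset ℕ) = {1, 2, 2} ∨
        (List.ofFn k : Multiset ℕ) = {1, 2, 3} ∨
        (List.ofFn k : Multiset ℕ) = {1, 2, 4}))) :
    ∀ s : ℝ, 1 ≤ s → starFun n k s ≠ 0 := by
  intro s hs
  refine ne_of_lt ?_
  have ht : 0 ≤ s - 1 := sub_nonneg.mpr hs
  rcases hDynkin with hn | ⟨rfl, hD | hE6 | hE7 | hE8⟩
  · rcases Nat.eq_zero_or_pos n with rfl | hn0
    · simp only [starFun, Finset.univ_eq_empty, Finset.sum_empty]
      push_cast
      linarith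
    · have : (n : ℝ) ≤ 2 := by exact_mod_cast hn
      nlinarith [starFun_lt n hn0 k hs]
  · obtain ⟨m, -, hk⟩ := hD
    linarith [starFun_three hk s, sub_lt_branchWeight_typeD ht m]
  · have := branchWeight_antitone ht (show 2 ≤ 4 by norm_num)
    linarith [starFun_three hE6 s, sub_lt_branchWeight_typeE8 ht]
  · have := branchWeight_antitone ht (show 3 ≤ 4 by norm_num)
    linarith [starFun_three hE7 s, sub_lt_branchWeight_typeE8 ht]
  · linarith [starFun_three hE8 s, sub_lt_branchWeight_typeE8 ht]

theorem stmt_0 (n : ℕ) (hn : 1 ≤ n) (k : Fin n → ℕ) (hk : ∀ l, 1 ≤ k l)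
    (hDynkin : n ≤ 2 ∨ (n = 3 ∧
      ((∃ m : ℕ, 1 ≤ m ∧ (List.ofFn k : Multiset ℕ) = {1, 1, m}) ∨
        (List.ofFn k : Multiset ℕ) = {1, 2, 2} ∨
        (List.ofFn k : Multiset ℕ) = {1, 2, 3} ∨
        (List.ofFn k : Multiset ℕ) = {1, 2, 4}))) :
    ∀ s : ℝ, 1 ≤ s → starFun n k s ≠ 0 :=
  stmt_0_general n k hDynkin
end

section
/- Let n ≥ 1 and k_1, …, k_n ≥ 1 be integers, and define f(s) = n − s − Σ_{l=1}^n 1/(1 + (s−1) + … + (s−1)^{k_l}) for s ≥ 1. If the multiset {k_1, …, k_n} is one of {1,1,1,1} (extended Dynkin graph D̃4), {2,2,2} (Ẽ6), {1,3,3} (Ẽ7), or {1,2,5} (Ẽ8), then s = 2 is the unique solution of f(s) = 0 in [1, ∞). -/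
/-!
Put `x = s - 1 ≥ 0`. Each summand `1 / (1 + x + ⋯ + x^k)` lies above its tangent line at `x = 1`,
because `2(k+1) - (2 + k - kx)(1 + x + ⋯ + x^k) = ∑_{j=1}^k (1 - x^j)(1 - x^(k+1-j))` and the two
factors of each term have the same sign; the inequality is strict for `x ≠ 1` and `k ≥ 1`.
All four multisets satisfy `∑ 1/(k_l + 1) = n - 2`, and under this condition the tangent lines add up
to exactly `n - s`, so `f(s) ≤ 0` on `[1, ∞)` with equality only at `s = 2`.
-/

open Finset

section GeomSum

variable {R : Type*}

theorem two_mul_succ_sub_mul_geom_sum [CommRing R] (x : R) (k : ℕ) :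
    2 * (k + 1) - (2 + k - k * x) * ∑ j ∈ range (k + 1), x ^ j =
      ∑ j ∈ range k, (1 - x ^ (j + 1)) * (1 - x ^ (k - j)) := by
  have hreflect : ∑ j ∈ range k, x ^ (k - j) = ∑ j ∈ range k, x ^ (j + 1) := by
    rw [← sum_range_reflect]
    exact sum_congr rfl fun j hj => by have := mem_range.mp hj; congr 1; omega
  have hpow : ∀ j ∈ range k, x ^ (j + 1) * x ^ (k - j) = x ^ (k + 1) := fun j hj => by
    have := mem_range.mp hj; rw [← pow_add]; congr 1; omega
  have hG : ∑ j ∈ range (k + 1), x ^ j = 1 + ∑ j ∈ range k, x ^ (j + 1) := by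
    rw [sum_range_succ', pow_zero, add_comm]
  have hxG : x * ∑ j ∈ range (k + 1), x ^ j = ∑ j ∈ range k, x ^ (j + 1) + x ^ (k + 1) := by
    rw [mul_sum, sum_range_succ]; simp only [pow_succ']
  have hrhs : ∑ j ∈ range k, (1 - x ^ (j + 1)) * (1 - x ^ (k - j)) =
      k - 2 * ∑ j ∈ range k, x ^ (j + 1) + k * x ^ (k + 1) := by
    simp only [sub_mul, mul_sub, one_mul, mul_one, sum_sub_distrib,
      sum_congr rfl hpow, hreflect, sum_const, card_range, nsmul_eq_mul]
    ring
  rw [hrhs]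
  linear_combination (k : R) * hxG - (2 + k) * hG

variable [CommRing R] [LinearOrder R] [IsStrictOrderedRing R] {x : R}

theorem one_sub_pow_mul_one_sub_pow_nonneg (hx : 0 ≤ x) (a b : ℕ) :
    0 ≤ (1 - x ^ a) * (1 - x ^ b) := by
  rcases le_total x 1 with h | h
  · exact mul_nonneg (sub_nonneg.2 (pow_le_one₀ hx h)) (sub_nonneg.2 (pow_le_one₀ hx h))
  · exact mul_nonneg_of_nonpos_of_nonpos (sub_nonpos.2 (one_le_pow₀ h))
      (sub_nonpos.2 (one_le_pow₀ h))

theorem one_sub_pow_mul_one_sub_pow_pos (hx : 0 ≤ x) (hx1 : x ≠ 1) {a b : ℕ} (ha : a ≠ 0)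
    (hb : b ≠ 0) : 0 < (1 - x ^ a) * (1 - x ^ b) := by
  rcases hx1.lt_or_gt with h | h
  · exact mul_pos (sub_pos.2 (pow_lt_one₀ hx h ha)) (sub_pos.2 (pow_lt_one₀ hx h hb))
  · exact mul_pos_of_neg_of_neg (sub_neg.2 (one_lt_pow₀ h ha)) (sub_neg.2 (one_lt_pow₀ h hb))

end GeomSum

section Tangent

variable {K : Type*} [Field K] [LinearOrder K] [IsStrictOrderedRing K] {x : K}

theorem div_le_inv_geom_sum (hx : 0 ≤ x) (k : ℕ) :
    (2 + k - k * x) / (2 * (k + 1)) ≤ (∑ j ∈ range (k + 1), x ^ j)⁻¹ := by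
  have hgap := two_mul_succ_sub_mul_geom_sum x k
  have hnonneg : 0 ≤ ∑ j ∈ range k, (1 - x ^ (j + 1)) * (1 - x ^ (k - j)) :=
    sum_nonneg fun j _ => one_sub_pow_mul_one_sub_pow_nonneg hx _ _
  rw [div_le_iff₀ (by positivity), inv_mul_eq_div, le_div_iff₀ (geom_sum_pos hx k.succ_ne_zero)]
  linarith

theorem div_lt_inv_geom_sum (hx : 0 ≤ x) (hx1 : x ≠ 1) {k : ℕ} (hk : k ≠ 0) :
    (2 + k - k * x) / (2 * (k + 1)) < (∑ j ∈ range (k + 1), x ^ j)⁻¹ := by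
  have hgap := two_mul_succ_sub_mul_geom_sum x k
  have hpos : 0 < ∑ j ∈ range k, (1 - x ^ (j + 1)) * (1 - x ^ (k - j)) :=
    sum_pos (fun j hj => one_sub_pow_mul_one_sub_pow_pos hx hx1 j.succ_ne_zero
      (Nat.sub_ne_zero_of_lt (mem_range.mp hj))) (nonempty_range_iff.mpr hk)
  rw [div_lt_iff₀ (by positivity), inv_mul_eq_div, lt_div_iff₀ (geom_sum_pos hx k.succ_ne_zero)]
  linarith

end Tangent

section StarFun

variable {n : ℕ} {k : Fin n → ℕ}

theorem sum_div_eq_of_sum_inv_succ (hk : ∑ l, ((k l : ℝ) + 1)⁻¹ = n - 2) (x : ℝ) :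
    ∑ l, (2 + k l - k l * x) / (2 * (k l + 1)) = n - 1 - x := by
  have hsplit : ∀ l, (2 + k l - k l * x) / (2 * (k l + 1)) =
      (1 - x) / 2 + (1 + x) / 2 * ((k l : ℝ) + 1)⁻¹ := fun l => by
    field_simp; ring
  simp only [hsplit, sum_add_distrib, ← mul_sum, hk, sum_const, card_univ, Fintype.card_fin,
    nsmul_eq_mul]
  ring

theorem starFun_two_eq_zero (hk : ∑ l, ((k l : ℝ) + 1)⁻¹ = n - 2) : starFun n k 2 = 0 := by
  norm_num [starFun, hk]

theorem starFun_lt_zero (hk : ∑ l, ((k l : ℝ) + 1)⁻¹ = n - 2) {s : ℝ} (hs : 1 ≤ s)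
    (hs2 : s ≠ 2) : starFun n k s < 0 := by
  obtain ⟨l, hl⟩ : ∃ l, k l ≠ 0 := by
    by_contra! h0
    simp only [h0, CharP.cast_eq_zero, zero_add, inv_one, sum_const, card_univ,
      Fintype.card_fin, nsmul_eq_mul, mul_one] at hk
    linarith
  have hlt := sum_lt_sum (fun l _ => div_le_inv_geom_sum (sub_nonneg.2 hs) (k l))
    ⟨l, mem_univ l, div_lt_inv_geom_sum (sub_nonneg.2 hs) (by contrapose! hs2; linarith) hl⟩
  rw [sum_div_eq_of_sum_inv_succ hk] at hlt
  unfold starFun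
  linarith

end StarFun

theorem stmt_1_general (n : ℕ) (k : Fin n → ℕ)
    (hExt : (List.ofFn k : Multiset ℕ) = {1, 1, 1, 1} ∨
      (List.ofFn k : Multiset ℕ) = {2, 2, 2} ∨
      (List.ofFn k : Multiset ℕ) = {1, 3, 3} ∨
      (List.ofFn k : Multiset ℕ) = {1, 2, 5}) :
    starFun n k 2 = 0 ∧ ∀ s : ℝ, 1 ≤ s → starFun n k s = 0 → s = 2 := by
  have hsum : ∑ l, ((k l : ℝ) + 1)⁻¹ =
      ((List.ofFn k : Multiset ℕ).map fun m => ((m : ℝ) + 1)⁻¹).sum := by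
    simp [List.sum_ofFn]
  have hcard : (n : ℝ) = Multiset.card (List.ofFn k : Multiset ℕ) := by simp
  have hk : ∑ l, ((k l : ℝ) + 1)⁻¹ = n - 2 := by
    rw [hsum, hcard]
    rcases hExt with h | h | h | h <;> rw [h] <;> norm_num
  exact ⟨starFun_two_eq_zero hk, fun s hs hs0 =>
    by_contra fun hs2 => (starFun_lt_zero hk hs hs2).ne hs0⟩

theorem stmt_1 (n : ℕ) (hn : 1 ≤ n) (k : Fin n → ℕ) (hk : ∀ l, 1 ≤ k l)
    (hExt : (List.ofFn k : Multiset ℕ) = {1, 1, 1, 1} ∨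
      (List.ofFn k : Multiset ℕ) = {2, 2, 2} ∨
      (List.ofFn k : Multiset ℕ) = {1, 3, 3} ∨
      (List.ofFn k : Multiset ℕ) = {1, 2, 5}) :
    starFun n k 2 = 0 ∧ ∀ s : ℝ, 1 ≤ s → starFun n k s = 0 → s = 2 :=
  stmt_1_general n k hExt
end

section
/- Let n ≥ 1 and k_1, …, k_n ≥ 1 be integers, and define f(s) = n − s − Σ_{l=1}^n 1/(1 + (s−1) + … + (s−1)^{k_l}) for s ≥ 1. Suppose the star-shaped graph with branch lengths k_1, …, k_n is neither a Dynkin graph (i.e., not: n ≤ 2, or n = 3 with branch-length multiset {1,1,m}, {1,2,2}, {1,2,3}, or {1,2,4}) nor an extended Dynkin graph (i.e., the multiset {k_1,…,k_n} is not {1,1,1,1}, {2,2,2}, {1,3,3}, or {1,2,5}). Then f(s) = 0 has exactly two solutions s_1, s_2 in [1, ∞), and they satisfy 1 < s_1 < 2 < s_2 < n. -/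
/-!
`f` is concave on `[1, ∞)` because each `t ↦ 1 / P(t)`, `P(t) = ∑_{j<N} tʲ`, is convex on `[0, ∞)`.
The second derivative of `1 / P` has the sign of `2A² - PB`, where `A = ∑ j tʲ = t P'` and
`B = ∑ j (j - 1) tʲ = t² P''`, and these moment sums satisfy
`(t - 1)² (2A² - PB) = N tᴺ ((N - 1) tᴺ + N + 1 - 2P)`,
whose last factor is nonnegative since `tⁱ + t^(N-i) ≤ tᴺ + 1`.

Moreover `f 1 = -1`, `f n < 0` and `f 2 = n - 2 - ∑ 1 / (k_l + 1)`, which is positive as the star is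
neither Dynkin nor extended Dynkin. The intermediate value theorem gives a root in `(1, 2)` and one
in `(2, n)`, and a concave function that is positive at `2` vanishes at most once on each side
of `2`.
-/

open Finset Set

section GeomMoments

variable (t : ℝ)

lemma sum_range_mul_pow_mul_sub_one (N : ℕ) :
    (∑ j ∈ range N, (j : ℝ) * t ^ j) * (t - 1) = (N - 1) * t ^ N - ∑ j ∈ range N, t ^ j + 1 := by
  induction N with
  | zero => simp
  | succ N ih =>
    rw [sum_range_succ, sum_range_succ (fun j => t ^ j)]
    push_cast
    linear_combination ih

lemma sum_range_mul_sub_one_mul_pow_mul_sub_one (N : ℕ) :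
    (∑ j ∈ range N, (j : ℝ) * (j - 1) * t ^ j) * (t - 1) =
      (N - 1) * (N - 2) * t ^ N -
        2 * (∑ j ∈ range N, (j : ℝ) * t ^ j - ∑ j ∈ range N, t ^ j + 1) := by
  induction N with
  | zero => simp
  | succ N ih =>
    rw [sum_range_succ, sum_range_succ (fun j => (j : ℝ) * t ^ j), sum_range_succ (fun j => t ^ j)]
    push_cast
    linear_combination ih

variable {t}

lemma pow_add_pow_sub_le_pow_add_one (ht : 0 ≤ t) {i N : ℕ} (hi : i ≤ N) :
    t ^ i + t ^ (N - i) ≤ t ^ N + 1 := by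
  have hmul : t ^ i * t ^ (N - i) = t ^ N := by rw [← pow_add, Nat.add_sub_cancel' hi]
  have hsign : 0 ≤ (t ^ i - 1) * (t ^ (N - i) - 1) := by
    rcases le_total 1 t with h | h
    · exact mul_nonneg (sub_nonneg.2 (one_le_pow₀ h)) (sub_nonneg.2 (one_le_pow₀ h))
    · exact mul_nonneg_of_nonpos_of_nonpos (sub_nonpos.2 (pow_le_one₀ ht h))
        (sub_nonpos.2 (pow_le_one₀ ht h))
  nlinarith

lemma two_mul_geom_sum_le (ht : 0 ≤ t) (N : ℕ) :
    2 * ∑ i ∈ range (N + 1), t ^ i ≤ (N + 1) * (t ^ N + 1) := by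
  calc 2 * ∑ i ∈ range (N + 1), t ^ i = ∑ i ∈ range (N + 1), (t ^ i + t ^ (N - i)) := by
        have hrefl := sum_range_reflect (fun i => t ^ i) (N + 1)
        simp only [Nat.add_sub_cancel] at hrefl
        rw [sum_add_distrib, hrefl, two_mul]
    _ ≤ ∑ i ∈ range (N + 1), (t ^ N + 1) :=
        sum_le_sum fun i hi =>
          pow_add_pow_sub_le_pow_add_one ht (Nat.lt_succ_iff.1 (mem_range.1 hi))
    _ = (N + 1) * (t ^ N + 1) := by simp; ring

lemma geom_sum_mul_sum_le_of_ne_one (ht : 0 ≤ t) (ht1 : t ≠ 1) (N : ℕ) :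
    (∑ j ∈ range N, t ^ j) * ∑ j ∈ range N, (j : ℝ) * (j - 1) * t ^ j ≤
      2 * (∑ j ∈ range N, (j : ℝ) * t ^ j) ^ 2 := by
  set P := ∑ j ∈ range N, t ^ j
  set A := ∑ j ∈ range N, (j : ℝ) * t ^ j
  set B := ∑ j ∈ range N, (j : ℝ) * (j - 1) * t ^ j
  have hP := geom_sum_mul t N
  have hA := sum_range_mul_pow_mul_sub_one t N
  have hB := sum_range_mul_sub_one_mul_pow_mul_sub_one t N
  have hV : 2 * P ≤ (N - 1) * t ^ N + N + 1 := by
    have := two_mul_geom_sum_le ht N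
    rw [sum_range_succ] at this
    linarith
  have key : (t - 1) ^ 2 * (2 * A ^ 2 - P * B) =
      N * t ^ N * ((N - 1) * t ^ N + N + 1 - 2 * P) := by
    linear_combination (2 * A * (t - 1) + 2 * ((N - 1) * t ^ N - P + 1) + 2 * P) * hA
      - (B * (t - 1) + 2 * A) * hP - (t ^ N - 1) * hB
  have hprod : 0 ≤ (t - 1) ^ 2 * (2 * A ^ 2 - P * B) := by
    rw [key]
    exact mul_nonneg (by positivity) (by linarith)
  have := (mul_nonneg_iff_of_pos_left (by positivity [sub_ne_zero.2 ht1])).1 hprod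
  linarith

lemma geom_sum_mul_sum_le (ht : 0 ≤ t) (N : ℕ) :
    (∑ j ∈ range N, t ^ j) * ∑ j ∈ range N, (j : ℝ) * (j - 1) * t ^ j ≤
      2 * (∑ j ∈ range N, (j : ℝ) * t ^ j) ^ 2 := by
  rcases eq_or_ne t 1 with rfl | ht1
  · -- the identity behind the case `t ≠ 1` says nothing at `t = 1`; pass to the limit instead
    have hclosed : IsClosed {t : ℝ |
        (∑ j ∈ range N, t ^ j) * ∑ j ∈ range N, (j : ℝ) * (j - 1) * t ^ j ≤
          2 * (∑ j ∈ range N, (j : ℝ) * t ^ j) ^ 2} := isClosed_le (by fun_prop) (by fun_prop)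
    have hsub : Ioi (1 : ℝ) ⊆ _ := fun t (ht : 1 < t) =>
      geom_sum_mul_sum_le_of_ne_one (by linarith) ht.ne' N
    exact hclosed.closure_subset_iff.2 hsub (by simp)
  · exact geom_sum_mul_sum_le_of_ne_one ht ht1 N

end GeomMoments

lemma convexOn_inv_of_hasDerivAt {D : Set ℝ} (hD : Convex ℝ D) {P Q R : ℝ → ℝ}
    (hPc : ContinuousOn P D) (hP : ∀ x ∈ D, 0 < P x)
    (hPQ : ∀ x ∈ interior D, HasDerivAt P (Q x) x) (hQR : ∀ x ∈ interior D, HasDerivAt Q (R x) x)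
    (hPR : ∀ x ∈ interior D, P x * R x ≤ 2 * Q x ^ 2) :
    ConvexOn ℝ D fun x => (P x)⁻¹ := by
  have hPi : ∀ x ∈ interior D, 0 < P x := fun x hx => hP x (interior_subset hx)
  refine convexOn_of_hasDerivWithinAt2_nonneg hD (hPc.inv₀ fun x hx => (hP x hx).ne')
    (f' := fun x => -Q x / P x ^ 2) (f'' := fun x => (2 * Q x ^ 2 - P x * R x) / P x ^ 3)
    (fun x hx => ((hPQ x hx).inv (hPi x hx).ne').hasDerivWithinAt)
    (fun x hx => ?_) (fun x hx => div_nonneg (sub_nonneg.2 (hPR x hx)) (pow_pos (hPi x hx) 3).le)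
  have hPx := (hPi x hx).ne'
  refine (((hQR x hx).fun_neg.fun_div ((hPQ x hx).fun_pow 2) (pow_ne_zero 2 hPx)).congr_deriv
    ?_).hasDerivWithinAt
  field_simp
  ring

lemma natCast_mul_pow_pred_mul_self (j : ℕ) (t : ℝ) : (j : ℝ) * t ^ (j - 1) * t = j * t ^ j := by
  cases j with
  | zero => simp
  | succ j => simp [pow_succ, mul_assoc]

lemma natCast_mul_natCast_pred_mul_pow_mul_sq (j : ℕ) (t : ℝ) :
    (j : ℝ) * ((j - 1 : ℕ) * t ^ (j - 1 - 1)) * t ^ 2 = j * (j - 1) * t ^ j := by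
  rcases j with _ | _ | j
  · simp
  · simp
  · simp only [Nat.add_sub_cancel]
    push_cast
    ring

lemma convexOn_inv_geom_sum {N : ℕ} (hN : N ≠ 0) :
    ConvexOn ℝ (Ici 0) fun t : ℝ => (∑ j ∈ range N, t ^ j)⁻¹ := by
  refine convexOn_inv_of_hasDerivAt (convex_Ici 0) (by fun_prop) (fun t ht => geom_sum_pos ht hN)
    (Q := fun t => ∑ j ∈ range N, (j : ℝ) * t ^ (j - 1))
    (R := fun t => ∑ j ∈ range N, (j : ℝ) * ((j - 1 : ℕ) * t ^ (j - 1 - 1)))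
    (fun t _ => HasDerivAt.fun_sum fun j _ => hasDerivAt_pow j t)
    (fun t _ => HasDerivAt.fun_sum fun j _ => (hasDerivAt_pow (j - 1) t).const_mul (j : ℝ))
    (fun t ht => ?_)
  rw [interior_Ici] at ht
  have ht0 : (0 : ℝ) < t := ht
  have h := geom_sum_mul_sum_le ht0.le N
  simp only [← natCast_mul_pow_pred_mul_self _ t, ← natCast_mul_natCast_pred_mul_pow_mul_sq _ t,
    ← sum_mul] at h
  have ht2 : (0 : ℝ) < t ^ 2 := by positivity
  nlinarith

lemma convexOn_inv_geom_sum_sub_one {N : ℕ} (hN : N ≠ 0) :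
    ConvexOn ℝ (Ici 1) fun s : ℝ => (∑ j ∈ range N, (s - 1) ^ j)⁻¹ := by
  have h := (convexOn_inv_geom_sum hN).translate_right (-1)
  have hdom : (fun z : ℝ => -1 + z) ⁻¹' Ici 0 = Ici (1 : ℝ) := by ext; simp [neg_add_eq_sub]
  rw [hdom] at h
  simpa only [Function.comp_def, neg_add_eq_sub] using h

lemma concaveOn_starFun (n : ℕ) (k : Fin n → ℕ) : ConcaveOn ℝ (Ici 1) (starFun n k) := by
  have hsum : ConvexOn ℝ (Ici 1) fun s : ℝ => ∑ l, (∑ j ∈ range (k l + 1), (s - 1) ^ j)⁻¹ := by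
    simpa only [← sum_fn] using sum_induction _ (ConvexOn ℝ (Ici 1))
      (fun _ _ => ConvexOn.add) (convexOn_const 0 (convex_Ici 1))
      fun l _ => convexOn_inv_geom_sum_sub_one (Nat.succ_ne_zero (k l))
  exact ((concaveOn_const _ (convex_Ici 1)).sub (convexOn_id (convex_Ici 1))).sub hsum

lemma continuousOn_starFun (n : ℕ) (k : Fin n → ℕ) : ContinuousOn (starFun n k) (Ici 1) := by
  refine continuousOn_const.sub continuousOn_id |>.sub <| continuousOn_finsetSum _ fun l _ => ?_
  exact ContinuousOn.inv₀ (by fun_prop) fun s (hs : 1 ≤ s) =>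
    (geom_sum_pos (sub_nonneg.2 hs) (Nat.succ_ne_zero _)).ne'

lemma starFun_one (n : ℕ) (k : Fin n → ℕ) : starFun n k 1 = -1 := by
  simp [starFun, sum_range_succ']

lemma starFun_two (n : ℕ) (k : Fin n → ℕ) :
    starFun n k 2 = n - 2 - ∑ l, ((k l : ℝ) + 1)⁻¹ := by
  norm_num [starFun]

lemma starFun_natCast_neg {n : ℕ} (hn : n ≠ 0) (k : Fin n → ℕ) : starFun n k n < 0 := by
  have : 0 < ∑ l, (∑ j ∈ range (k l + 1), ((n : ℝ) - 1) ^ j)⁻¹ := by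
    have : (1 : ℝ) ≤ n := by exact_mod_cast Nat.one_le_iff_ne_zero.2 hn
    refine sum_pos (fun l _ => inv_pos.2 (geom_sum_pos (by linarith) (Nat.succ_ne_zero _))) ?_
    exact ⟨⟨0, Nat.pos_of_ne_zero hn⟩, mem_univ _⟩
  simp only [starFun]
  linarith

lemma eq_of_one_le_sum_inv_succ {a b c : ℕ} (ha : 1 ≤ a) (hab : a ≤ b) (hbc : b ≤ c)
    (h : 1 ≤ ((a : ℝ) + 1)⁻¹ + ((b : ℝ) + 1)⁻¹ + ((c : ℝ) + 1)⁻¹) :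
    (a = 1 ∧ b = 1) ∨ (a = 1 ∧ b = 2 ∧ c ≤ 5) ∨ (a = 1 ∧ b = 3 ∧ c = 3) ∨
      (a = 2 ∧ b = 2 ∧ c = 2) := by
  have hN : (a + 1) * (b + 1) * (c + 1) ≤
      (b + 1) * (c + 1) + (a + 1) * (c + 1) + (a + 1) * (b + 1) := by
    have hR : ((a : ℝ) + 1) * (b + 1) * (c + 1) ≤
        (b + 1) * (c + 1) + (a + 1) * (c + 1) + (a + 1) * (b + 1) := by
      field_simp at h
      linarith
    exact_mod_cast hR
  have ha2 : a ≤ 2 := by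
    have h1 : (a + 1) * (c + 1) ≤ (b + 1) * (c + 1) := by gcongr
    have h2 : (a + 1) * (b + 1) ≤ (b + 1) * (c + 1) := by rw [mul_comm]; gcongr; omega
    have h3 : (a + 1) * ((b + 1) * (c + 1)) ≤ 3 * ((b + 1) * (c + 1)) := by
      rw [← mul_assoc]; omega
    have := Nat.le_of_mul_le_mul_right h3 (by positivity)
    omega
  interval_cases a
  · have hb3 : b ≤ 3 := by nlinarith
    interval_cases b <;> omega
  · have hb2 : b ≤ 2 := by nlinarith
    interval_cases b
    omega

lemma Multiset.exists_le_le_eq_triple {α : Type*} [LinearOrder α] {M : Multiset α}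
    (hM : M.card = 3) : ∃ a b c, a ≤ b ∧ b ≤ c ∧ M = {a, b, c} := by
  have hlen : (M.sort (· ≤ ·)).length = 3 := by rw [Multiset.length_sort, hM]
  have hsorted := Multiset.pairwise_sort M (· ≤ ·)
  have heq := Multiset.sort_eq M (· ≤ ·)
  match hL : M.sort (· ≤ ·), hlen, hsorted with
  | [a, b, c], _, hs =>
    obtain ⟨⟨hab, -⟩, hbc⟩ : (a ≤ b ∧ a ≤ c) ∧ b ≤ c := by simpa using hs
    exact ⟨a, b, c, hab, hbc, by rw [← heq, hL]; rfl⟩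

lemma Multiset.eq_triple_of_one_le_sum_inv_succ {M : Multiset ℕ} (hM : M.card = 3)
    (hpos : ∀ m ∈ M, 1 ≤ m) (h : 1 ≤ (M.map fun m : ℕ => ((m : ℝ) + 1)⁻¹).sum) :
    (∃ m, 1 ≤ m ∧ M = {1, 1, m}) ∨ M = {1, 2, 2} ∨ M = {1, 2, 3} ∨ M = {1, 2, 4} ∨
      M = {2, 2, 2} ∨ M = {1, 3, 3} ∨ M = {1, 2, 5} := by
  obtain ⟨a, b, c, hab, hbc, rfl⟩ := Multiset.exists_le_le_eq_triple hM
  simp only [Multiset.insert_eq_cons, Multiset.map_cons, Multiset.sum_cons, Multiset.map_singleton,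
    Multiset.sum_singleton, ← add_assoc] at h
  rcases eq_of_one_le_sum_inv_succ (hpos a (by simp)) hab hbc h with
    ⟨rfl, rfl⟩ | ⟨rfl, rfl, hc⟩ | ⟨rfl, rfl, rfl⟩ | ⟨rfl, rfl, rfl⟩
  · exact Or.inl ⟨c, hpos c (by simp), rfl⟩
  · interval_cases c <;> simp
  · simp
  · simp

-- the stars of types `A`, `D`, `E₆`, `E₇`, `E₈`
def IsDynkinStar (n : ℕ) (k : Fin n → ℕ) : Prop :=
  n ≤ 2 ∨ (n = 3 ∧
    ((∃ m : ℕ, 1 ≤ m ∧ (List.ofFn k : Multiset ℕ) = {1, 1, m}) ∨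
      (List.ofFn k : Multiset ℕ) = {1, 2, 2} ∨
      (List.ofFn k : Multiset ℕ) = {1, 2, 3} ∨
      (List.ofFn k : Multiset ℕ) = {1, 2, 4}))

-- the stars of types `D̃₄`, `Ẽ₆`, `Ẽ₇`, `Ẽ₈`
def IsExtendedDynkinStar (n : ℕ) (k : Fin n → ℕ) : Prop :=
  (List.ofFn k : Multiset ℕ) = {1, 1, 1, 1} ∨
    (List.ofFn k : Multiset ℕ) = {2, 2, 2} ∨
    (List.ofFn k : Multiset ℕ) = {1, 3, 3} ∨
    (List.ofFn k : Multiset ℕ) = {1, 2, 5}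

lemma three_le_of_not_isDynkinStar {n : ℕ} {k : Fin n → ℕ} (hD : ¬IsDynkinStar n k) : 3 ≤ n := by
  unfold IsDynkinStar at hD
  omega

lemma sum_inv_succ_lt_one_of_fin_three {k : Fin 3 → ℕ} (hk : ∀ l, 1 ≤ k l)
    (hD : ¬IsDynkinStar 3 k) (hE : ¬IsExtendedDynkinStar 3 k) :
    ∑ l, ((k l : ℝ) + 1)⁻¹ < 1 := by
  have hsum : ∑ l, ((k l : ℝ) + 1)⁻¹ =
      ((List.ofFn k : Multiset ℕ).map fun m : ℕ => ((m : ℝ) + 1)⁻¹).sum := by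
    simp only [Multiset.map_coe, Multiset.sum_coe, List.map_ofFn, List.sum_ofFn]; rfl
  have hpos : ∀ m ∈ (List.ofFn k : Multiset ℕ), 1 ≤ m := by
    intro m hm
    obtain ⟨l, rfl⟩ := List.mem_ofFn.1 hm
    exact hk l
  by_contra! h
  rw [hsum] at h
  rcases Multiset.eq_triple_of_one_le_sum_inv_succ (by simp) hpos h with
    hM | hM | hM | hM | hM | hM | hM
  · exact hD (Or.inr ⟨rfl, Or.inl hM⟩)
  · exact hD (Or.inr ⟨rfl, Or.inr (Or.inl hM)⟩)
  · exact hD (Or.inr ⟨rfl, Or.inr (Or.inr (Or.inl hM))⟩)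
  · exact hD (Or.inr ⟨rfl, Or.inr (Or.inr (Or.inr hM))⟩)
  · exact hE (Or.inr (Or.inl hM))
  · exact hE (Or.inr (Or.inr (Or.inl hM)))
  · exact hE (Or.inr (Or.inr (Or.inr hM)))

lemma sum_inv_succ_lt_of_not_isDynkinStar {n : ℕ} {k : Fin n → ℕ} (hk : ∀ l, 1 ≤ k l)
    (hD : ¬IsDynkinStar n k) (hE : ¬IsExtendedDynkinStar n k) :
    ∑ l, ((k l : ℝ) + 1)⁻¹ < n - 2 := by
  have hhalf : ∀ l, ((k l : ℝ) + 1)⁻¹ ≤ 2⁻¹ := fun l => by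
    have : (1 : ℝ) ≤ k l := by exact_mod_cast hk l
    gcongr; linarith
  rcases (show n = 3 ∨ n = 4 ∨ 5 ≤ n by have := three_le_of_not_isDynkinStar hD; omega)
    with rfl | rfl | hn5
  · push_cast
    linarith [sum_inv_succ_lt_one_of_fin_three hk hD hE]
  · obtain ⟨l₀, hl₀⟩ : ∃ l, 2 ≤ k l := by
      by_contra! h
      have : k = fun _ => 1 := funext fun l => by have := hk l; have := h l; omega
      subst this
      exact hE (Or.inl rfl)
    calc ∑ l, ((k l : ℝ) + 1)⁻¹ < ∑ _l : Fin 4, (2⁻¹ : ℝ) := by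
          refine sum_lt_sum (fun l _ => hhalf l) ⟨l₀, mem_univ _, ?_⟩
          have : (2 : ℝ) ≤ k l₀ := by exact_mod_cast hl₀
          gcongr; linarith
      _ = (4 : ℕ) - 2 := by norm_num
  · calc ∑ l, ((k l : ℝ) + 1)⁻¹ ≤ ∑ _l : Fin n, (2⁻¹ : ℝ) := sum_le_sum fun l _ => hhalf l
      _ < n - 2 := by
          have : (5 : ℝ) ≤ n := by exact_mod_cast hn5
          rw [sum_const, card_univ, Fintype.card_fin, nsmul_eq_mul]
          linarith

lemma starFun_two_pos {n : ℕ} {k : Fin n → ℕ} (hk : ∀ l, 1 ≤ k l)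
    (hD : ¬IsDynkinStar n k) (hE : ¬IsExtendedDynkinStar n k) : 0 < starFun n k 2 := by
  rw [starFun_two]
  linarith [sum_inv_succ_lt_of_not_isDynkinStar hk hD hE]

lemma ConcaveOn.eq_of_map_eq_zero_of_lt {s : Set ℝ} {f : ℝ → ℝ} (hf : ConcaveOn ℝ s f)
    {x y c : ℝ} (hx : x ∈ s) (hy : y ∈ s) (hc : c ∈ s) (hfc : 0 < f c) (hfx : f x = 0)
    (hfy : f y = 0) (hxc : x < c) (hyc : y < c) : x = y := by
  wlog hxy : x < y generalizing x y
  · rcases (not_lt.1 hxy).eq_or_lt with h | h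
    · exact h.symm
    · exact (this hy hx hfy hfx hyc hxc h).symm
  have := hf.left_lt_of_lt_right hx hc
    (by rw [openSegment_eq_Ioo (hxy.trans hyc)]; exact ⟨hxy, hyc⟩) (by rwa [hfy])
  linarith

lemma ConcaveOn.eq_of_map_eq_zero_of_gt {s : Set ℝ} {f : ℝ → ℝ} (hf : ConcaveOn ℝ s f)
    {x y c : ℝ} (hx : x ∈ s) (hy : y ∈ s) (hc : c ∈ s) (hfc : 0 < f c) (hfx : f x = 0)
    (hfy : f y = 0) (hxc : c < x) (hyc : c < y) : x = y := by
  wlog hxy : x < y generalizing x y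
  · rcases (not_lt.1 hxy).eq_or_lt with h | h
    · exact h.symm
    · exact (this hy hx hfy hfx hyc hxc h).symm
  have := hf.lt_right_of_left_lt hc hy
    (by rw [openSegment_eq_Ioo (hxc.trans hxy)]; exact ⟨hxc, hxy⟩) (by rwa [hfx])
  linarith

theorem stmt_2_general (n : ℕ) (k : Fin n → ℕ) (hk : ∀ l, 1 ≤ k l)
    (hNotDynkin : ¬(n ≤ 2 ∨ (n = 3 ∧
      ((∃ m : ℕ, 1 ≤ m ∧ (List.ofFn k : Multiset ℕ) = {1, 1, m}) ∨
        (List.ofFn k : Multiset ℕ) = {1, 2, 2} ∨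
        (List.ofFn k : Multiset ℕ) = {1, 2, 3} ∨
        (List.ofFn k : Multiset ℕ) = {1, 2, 4}))))
    (hNotExt : ¬((List.ofFn k : Multiset ℕ) = {1, 1, 1, 1} ∨
      (List.ofFn k : Multiset ℕ) = {2, 2, 2} ∨
      (List.ofFn k : Multiset ℕ) = {1, 3, 3} ∨
      (List.ofFn k : Multiset ℕ) = {1, 2, 5})) :
    ∃ s₁ s₂ : ℝ, 1 < s₁ ∧ s₁ < 2 ∧ 2 < s₂ ∧ s₂ < n ∧
      starFun n k s₁ = 0 ∧ starFun n k s₂ = 0 ∧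
      ∀ s : ℝ, 1 ≤ s → starFun n k s = 0 → s = s₁ ∨ s = s₂ := by
  have hn : 3 ≤ n := three_le_of_not_isDynkinStar hNotDynkin
  have hf := concaveOn_starFun n k
  have hcont := continuousOn_starFun n k
  have hf1 : starFun n k 1 < 0 := by rw [starFun_one]; norm_num
  have hf2 : 0 < starFun n k 2 := starFun_two_pos hk hNotDynkin hNotExt
  have hfn : starFun n k n < 0 := starFun_natCast_neg (by omega) k
  have hn2 : (2 : ℝ) ≤ n := by exact_mod_cast (by omega : 2 ≤ n)
  obtain ⟨s₁, ⟨h1s₁, hs₁2⟩, hs₁⟩ :=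
    intermediate_value_Ioo (by norm_num) (hcont.mono Icc_subset_Ici_self) ⟨hf1, hf2⟩
  obtain ⟨s₂, ⟨h2s₂, hs₂n⟩, hs₂⟩ := intermediate_value_Ioo' hn2
    (hcont.mono (Icc_subset_Ici_iff hn2 |>.2 one_le_two)) ⟨hfn, hf2⟩
  refine ⟨s₁, s₂, h1s₁, hs₁2, h2s₂, hs₂n, hs₁, hs₂, fun s hs hs0 => ?_⟩
  have h1s₁' : (1 : ℝ) ≤ s₁ := h1s₁.le
  have h1s₂ : (1 : ℝ) ≤ s₂ := by linarith
  rcases lt_or_gt_of_ne (show s ≠ 2 by rintro rfl; linarith) with hs2 | hs2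
  · exact .inl (hf.eq_of_map_eq_zero_of_lt hs h1s₁' (mem_Ici.2 one_le_two) hf2 hs0 hs₁ hs2 hs₁2)
  · exact .inr (hf.eq_of_map_eq_zero_of_gt hs h1s₂ (mem_Ici.2 one_le_two) hf2 hs0 hs₂ hs2 h2s₂)

theorem stmt_2 (n : ℕ) (hn : 1 ≤ n) (k : Fin n → ℕ) (hk : ∀ l, 1 ≤ k l)
    (hNotDynkin : ¬(n ≤ 2 ∨ (n = 3 ∧
      ((∃ m : ℕ, 1 ≤ m ∧ (List.ofFn k : Multiset ℕ) = {1, 1, m}) ∨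
        (List.ofFn k : Multiset ℕ) = {1, 2, 2} ∨
        (List.ofFn k : Multiset ℕ) = {1, 2, 3} ∨
        (List.ofFn k : Multiset ℕ) = {1, 2, 4}))))
    (hNotExt : ¬((List.ofFn k : Multiset ℕ) = {1, 1, 1, 1} ∨
      (List.ofFn k : Multiset ℕ) = {2, 2, 2} ∨
      (List.ofFn k : Multiset ℕ) = {1, 3, 3} ∨
      (List.ofFn k : Multiset ℕ) = {1, 2, 5})) :
    ∃ s₁ s₂ : ℝ, 1 < s₁ ∧ s₁ < 2 ∧ 2 < s₂ ∧ s₂ < n ∧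
      starFun n k s₁ = 0 ∧ starFun n k s₂ = 0 ∧
      ∀ s : ℝ, 1 ≤ s → starFun n k s = 0 → s = s₁ ∨ s = s₂ :=
  stmt_2_general n k hk hNotDynkin hNotExt
end

section
/- For every integer k ≥ 1 and every real x > 0, the function φ_k(x) = (1 + x + x^2 + … + x^k)^{−1} satisfies φ_k''(x) = (k+1) · x^{k−1} · ( Σ_{i=1}^{k} i·(k+1−i)·x^{i−1} ) · φ_k(x)^3, where the middle factor equals k·x^{k−1} + 2(k−1)·x^{k−2} + … + (k−1)·2·x + k. -/
/-!
Write `S = 1 + x + ⋯ + x^k`, so that `φ_k = 1/S` and `φ_k'' = (2 S'² - S'' S) / S³`.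
Differentiating `(x - 1) S = x^{k+1} - 1` once and twice gives two linear relations between
`S`, `S'`, `S''`, and eliminating `x - 1` from them turns `2 S'² - S'' S` into
`(k + 1) x^{k-1} (k S' - x S'')`, whose coefficients are `i (k + 1 - i)`.
-/

/-- `φ_k(x) = (1 + x + x² + … + x^k)⁻¹`. -/
noncomputable def phi (k : ℕ) (x : ℝ) : ℝ := (∑ j ∈ Finset.range (k + 1), x ^ j)⁻¹

open Finset

theorem deriv_deriv_inv {f f' : ℝ → ℝ} {f'' x : ℝ} (hf : ∀ y, HasDerivAt f (f' y) y)
    (hf' : HasDerivAt f' f'' x) (hx : f x ≠ 0) :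
    deriv (deriv fun y => (f y)⁻¹) x = (2 * f' x ^ 2 - f'' * f x) / f x ^ 3 := by
  have hderiv : deriv (fun y => (f y)⁻¹) =ᶠ[nhds x] fun y => -f' y / f y ^ 2 := by
    filter_upwards [(hf x).continuousAt.eventually_ne hx] with y hy
    exact ((hf y).inv hy).deriv
  rw [hderiv.deriv_eq, (hf'.fun_neg.fun_div ((hf x).fun_pow 2) (pow_ne_zero 2 hx)).deriv]
  field_simp
  ring

namespace GeomSum

noncomputable def S (k : ℕ) (x : ℝ) : ℝ := ∑ j ∈ range (k + 1), x ^ j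

noncomputable def S' (k : ℕ) (x : ℝ) : ℝ := ∑ j ∈ range (k + 1), (j : ℝ) * x ^ (j - 1)

noncomputable def S'' (k : ℕ) (x : ℝ) : ℝ :=
  ∑ j ∈ range (k + 1), (j : ℝ) * ((j - 1 : ℕ) : ℝ) * x ^ (j - 2)

variable (k : ℕ) (x : ℝ)

theorem hasDerivAt_S : HasDerivAt (S k) (S' k x) x :=
  HasDerivAt.fun_sum fun j _ => hasDerivAt_pow j x

theorem hasDerivAt_S' : HasDerivAt (S' k) (S'' k x) x := by
  refine HasDerivAt.fun_sum fun j _ => ?_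
  simpa [Nat.sub_sub, mul_assoc] using (hasDerivAt_pow (j - 1) x).const_mul (j : ℝ)

theorem S_pos (hx : 0 < x) : 0 < S k x :=
  geom_sum_pos hx.le k.succ_ne_zero

theorem S_add_sub_one_mul_S' : S k x + (x - 1) * S' k x = (k + 1) * x ^ k := by
  have hprod : (fun y => S k y * (y - 1)) = fun y => y ^ (k + 1) - 1 :=
    funext fun y => geom_sum_mul y (k + 1)
  have h := (hasDerivAt_S k x).fun_mul ((hasDerivAt_id' x).sub_const 1)
  rw [hprod] at h
  have := h.unique ((hasDerivAt_pow (k + 1) x).sub_const 1)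
  push_cast at this
  linarith

theorem two_mul_S'_add_sub_one_mul_S'' :
    2 * S' k x + (x - 1) * S'' k x = (k + 1) * k * x ^ (k - 1) := by
  have hrel : (fun y => S k y + (y - 1) * S' k y) = fun y => ((k : ℝ) + 1) * y ^ k :=
    funext (S_add_sub_one_mul_S' k)
  have h :=
    (hasDerivAt_S k x).fun_add (((hasDerivAt_id' x).sub_const 1).fun_mul (hasDerivAt_S' k x))
  rw [hrel] at h
  have := h.unique ((hasDerivAt_pow k x).const_mul ((k : ℝ) + 1))
  linarith

theorem two_mul_S'_sq_sub_S''_mul_S (hk : 1 ≤ k) :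
    2 * S' k x ^ 2 - S'' k x * S k x = (k + 1) * x ^ (k - 1) * (k * S' k x - x * S'' k x) := by
  have hpow : x ^ k = x ^ (k - 1) * x := by rw [← pow_succ, Nat.sub_add_cancel hk]
  have h1 := S_add_sub_one_mul_S' k x
  rw [hpow] at h1
  linear_combination S' k x * two_mul_S'_add_sub_one_mul_S'' k x - S'' k x * h1

theorem sum_Icc_eq_mul_S'_sub_mul_S'' :
    ∑ i ∈ Icc 1 k, (i : ℝ) * ((k + 1 - i : ℕ) : ℝ) * x ^ (i - 1) =
      k * S' k x - x * S'' k x := by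
  rw [S', S'', sum_range_succ', sum_range_succ', ← Ico_add_one_right_eq_Icc, sum_Ico_eq_sum_range]
  simp only [CharP.cast_eq_zero, zero_mul, add_zero, mul_sum, ← sum_sub_distrib,
    Nat.add_sub_cancel]
  refine sum_congr rfl fun i hi => ?_
  rw [mem_range] at hi
  rw [add_comm 1 i, Nat.add_sub_add_right, Nat.cast_sub hi.le]
  rcases i with _ | i
  · simp
  · push_cast
    ring

end GeomSum

theorem stmt_3 (k : ℕ) (hk : 1 ≤ k) (x : ℝ) (hx : 0 < x) :
    deriv (deriv (phi k)) x =
      ((k : ℝ) + 1) * x ^ (k - 1) *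
        (∑ i ∈ Finset.Icc 1 k, (i : ℝ) * ((k + 1 - i : ℕ) : ℝ) * x ^ (i - 1)) *
        (phi k x) ^ 3 := by
  have hphi : phi k = fun y => (GeomSum.S k y)⁻¹ := rfl
  rw [hphi, deriv_deriv_inv (GeomSum.hasDerivAt_S k) (GeomSum.hasDerivAt_S' k x)
      (GeomSum.S_pos k x hx).ne', GeomSum.sum_Icc_eq_mul_S'_sub_mul_S'',
    ← GeomSum.two_mul_S'_sq_sub_S''_mul_S k x hk, div_eq_mul_inv, inv_pow]
end

section
/- Let n ≥ 1 and k_1, …, k_n ≥ 1 be integers, and define f(s) = n − s − Σ_{l=1}^n 1/(1 + (s−1) + … + (s−1)^{k_l}). Then f is strictly concave on (1, ∞): its second derivative satisfies f''(s) < 0 for all s > 1. -/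
/-!
Write `[n](t) = 1 + t + ⋯ + t^(n-1)` and `t = s - 1`, so that `f(s) = n - 1 - t - ∑ₗ 1/[kₗ+1](t)`
and `f''(s) = -∑ₗ (1/[kₗ+1])''(t)`, where `(1/p)'' = (2p'² - p p'')/p³`. Differentiating
`[K+1](t) (t - 1) = t^(K+1) - 1` twice and cancelling the factor `(t - 1)²` gives the polynomial
identity `2[K+1]'² - [K+1][K+1]'' = (K+1) t^(K-1) ∑_{j=1}^{K} [j][K+1-j]`, whose right side is
positive for `t > 0`.
-/

open Polynomial Finset Filter Topology

section Algebra

variable {R : Type*} [CommRing R]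

theorem sum_range_pow_succ_sub_one_mul (x : R) (n : ℕ) :
    ∑ j ∈ range n, (x ^ (j + 1) - 1) * (x ^ (n - j) - 1)
      = n * (x ^ (n + 1) + 1) - 2 * ∑ j ∈ range n, x ^ (j + 1) := by
  have hreflect : ∑ j ∈ range n, x ^ (n - j) = ∑ j ∈ range n, x ^ (j + 1) := by
    rw [← sum_range_reflect]
    refine sum_congr rfl fun j hj => ?_
    rw [mem_range] at hj
    congr 1
    omega
  have hexpand : ∀ j ∈ range n, (x ^ (j + 1) - 1) * (x ^ (n - j) - 1)
      = x ^ (n + 1) + 1 - x ^ (j + 1) - x ^ (n - j) := by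
    intro j hj
    rw [mem_range] at hj
    rw [← show j + 1 + (n - j) = n + 1 by omega, pow_add]
    ring
  rw [sum_congr rfl hexpand, sum_sub_distrib, sum_sub_distrib, hreflect]
  simp only [sum_const, card_range, nsmul_eq_mul]
  ring

noncomputable def geomPoly (n : ℕ) : R[X] := ∑ i ∈ range n, X ^ i

theorem geomPoly_mul_X_sub_one (n : ℕ) : geomPoly n * (X - 1 : R[X]) = X ^ n - 1 :=
  geom_sum_mul X n

theorem X_sub_one_sq_mul_sum_geomPoly_mul (n : ℕ) :
    (X - 1) ^ 2 * ∑ j ∈ range n, geomPoly (j + 1) * (geomPoly (n - j) : R[X])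
      = (n : R[X]) * (X ^ (n + 1) + 1) - 2 * X * geomPoly n := by
  have hterm : ∀ j ∈ range n, (X - 1) ^ 2 * (geomPoly (j + 1) * (geomPoly (n - j) : R[X]))
      = (X ^ (j + 1) - 1) * (X ^ (n - j) - 1) := by
    intro j _
    rw [← geomPoly_mul_X_sub_one, ← geomPoly_mul_X_sub_one]
    ring
  rw [mul_sum, sum_congr rfl hterm, sum_range_pow_succ_sub_one_mul, geomPoly, mul_assoc, mul_sum]
  simp only [pow_succ', mul_sum]

theorem two_mul_derivative_sq_sub_geomPoly (m : ℕ) :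
    2 * derivative (geomPoly (m + 2)) ^ 2
        - geomPoly (m + 2) * derivative (derivative (geomPoly (m + 2)))
      = ((m : R[X]) + 2) * X ^ m
          * ∑ j ∈ range (m + 1), geomPoly (j + 1) * geomPoly (m + 1 - j) := by
  set p : R[X] := geomPoly (m + 2)
  have E1 : p * (X - 1) = X ^ (m + 2) - 1 := geomPoly_mul_X_sub_one _
  have E2 : derivative p * (X - 1) + p = ((m : R[X]) + 2) * X ^ (m + 1) := by
    have := congrArg derivative E1
    simp only [derivative_mul, derivative_sub, derivative_X, derivative_one, sub_zero, mul_one,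
      derivative_X_pow_succ, Nat.cast_add, Nat.cast_one, map_add, map_natCast, map_one] at this
    linear_combination this
  have E3 : derivative (derivative p) * (X - 1) + 2 * derivative p
      = ((m : R[X]) + 2) * ((m : R[X]) + 1) * X ^ m := by
    have := congrArg derivative E2
    simp only [derivative_mul, derivative_sub, derivative_X, derivative_one, sub_zero, mul_one,
      derivative_natCast, derivative_ofNat, add_zero, zero_mul, derivative_X_pow_succ, map_add,
      map_natCast, map_one, zero_add] at this
    linear_combination this
  have hp : p = geomPoly (m + 1) + X ^ (m + 1) := sum_range_succ _ _
  have hS : (X - 1) ^ 2 * ∑ j ∈ range (m + 1), geomPoly (j + 1) * (geomPoly (m + 1 - j) : R[X])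
      = ((m : R[X]) + 1) * (X ^ (m + 2) + 1) - 2 * X * geomPoly (m + 1) := by
    simpa using X_sub_one_sq_mul_sum_geomPoly_mul (R := R) (m + 1)
  apply ((monic_X_sub_C (1 : R)).pow 2).isRegular.left
  simp only [map_one]
  -- `(X - 1)² (2p'² - p p'') = 2 (p' (X - 1))² - (p (X - 1)) (p'' (X - 1))`, then E1–E3
  linear_combination (2 * derivative p * (X - 1) + 2 * (m + 2) * X ^ (m + 1)) * E2
    - p * (X - 1) * E3 - (m + 2) * (m + 1) * X ^ m * E1 - (m + 2) * X ^ m * hS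
    - 2 * (m + 2) * X ^ (m + 1) * hp

end Algebra

theorem eval_geomPoly_pos {R : Type*} [CommRing R] [LinearOrder R] [IsStrictOrderedRing R]
    {n : ℕ} (hn : 0 < n) {t : R} (ht : 0 ≤ t) : 0 < (geomPoly n).eval t := by
  rw [geomPoly, eval_geom_sum]
  exact sum_pos' (fun i _ => pow_nonneg ht i) ⟨0, mem_range.mpr hn, by simp⟩

theorem mul_derivative_derivative_lt_two_mul_sq_geomPoly {R : Type*} [CommRing R] [LinearOrder R]
    [IsStrictOrderedRing R] {K : ℕ} (hK : 1 ≤ K) {t : R} (ht : 0 < t) :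
    (geomPoly (K + 1)).eval t * (derivative (derivative (geomPoly (K + 1)))).eval t
      < 2 * (derivative (geomPoly (K + 1))).eval t ^ 2 := by
  obtain ⟨m, rfl⟩ : ∃ m, K = m + 1 := ⟨K - 1, by omega⟩
  have hid := congrArg (eval t) (two_mul_derivative_sq_sub_geomPoly (R := R) m)
  simp only [eval_sub, eval_mul, eval_pow, eval_add, eval_natCast, eval_ofNat, eval_X,
    eval_finsetSum] at hid
  rw [← sub_pos, hid]
  have hsum :
      0 < ∑ j ∈ range (m + 1), (geomPoly (j + 1)).eval t * (geomPoly (m + 1 - j)).eval t :=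
    sum_pos (fun j hj => mul_pos (eval_geomPoly_pos j.succ_pos ht.le)
      (eval_geomPoly_pos (by rw [mem_range] at hj; omega) ht.le)) nonempty_range_add_one
  positivity

section Analysis

variable {𝕜 : Type*} [NontriviallyNormedField 𝕜]

theorem Polynomial.hasDerivAt_deriv_inv_eval (p : 𝕜[X]) {x : 𝕜} (hx : p.eval x ≠ 0) :
    HasDerivAt (deriv fun y => (p.eval y)⁻¹)
      ((2 * (derivative p).eval x ^ 2 - p.eval x * (derivative (derivative p)).eval x)
        / p.eval x ^ 3) x := by
  have hderiv : deriv (fun y => (p.eval y)⁻¹) =ᶠ[𝓝 x]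
      fun y => -(derivative p).eval y / p.eval y ^ 2 :=
    (p.continuous.continuousAt.eventually_ne hx).mono fun y hy => ((p.hasDerivAt y).inv hy).deriv
  refine HasDerivAt.congr_of_eventuallyEq ?_ hderiv
  refine (((derivative p).hasDerivAt x).fun_neg.fun_div ((p.hasDerivAt x).fun_pow 2)
    (pow_ne_zero 2 hx)).congr_deriv ?_
  field_simp
  ring

theorem hasDerivAt_deriv_const_sub_sub_sum_inv_eval {ι : Type*} (s : Finset ι)
    (p : ι → 𝕜[X]) (c : 𝕜) {x : 𝕜} (hx : ∀ i ∈ s, (p i).eval x ≠ 0) :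
    HasDerivAt (deriv fun y => c - y - ∑ i ∈ s, ((p i).eval y)⁻¹)
      (-∑ i ∈ s, (2 * (derivative (p i)).eval x ^ 2
        - (p i).eval x * (derivative (derivative (p i))).eval x) / (p i).eval x ^ 3) x := by
  have hne : ∀ᶠ y in 𝓝 x, ∀ i ∈ s, (p i).eval y ≠ 0 :=
    (eventually_all_finset s).mpr fun i hi => (p i).continuous.continuousAt.eventually_ne (hx i hi)
  have hderiv : deriv (fun y => c - y - ∑ i ∈ s, ((p i).eval y)⁻¹) =ᶠ[𝓝 x]
      fun y => -1 - ∑ i ∈ s, deriv (fun y => ((p i).eval y)⁻¹) y := by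
    filter_upwards [hne] with y hy
    have hinv : ∀ i ∈ s, HasDerivAt (fun y => ((p i).eval y)⁻¹)
        (deriv (fun y => ((p i).eval y)⁻¹) y) y := fun i hi =>
      (((p i).hasDerivAt y).inv (hy i hi)).differentiableAt.hasDerivAt
    simpa using (((hasDerivAt_id y).const_sub c).fun_sub (HasDerivAt.fun_sum hinv)).deriv
  refine HasDerivAt.congr_of_eventuallyEq ?_ hderiv
  simpa using (HasDerivAt.fun_sum fun i hi => (p i).hasDerivAt_deriv_inv_eval (hx i hi)).const_sub
    (-1 : 𝕜)

end Analysis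

theorem starFun_eq_comp_sub_one (n : ℕ) (k : Fin n → ℕ) :
    starFun n k =
      fun s => ((n : ℝ) - 1) - (s - 1) - ∑ l, ((geomPoly (k l + 1)).eval (s - 1))⁻¹ := by
  funext s
  simp only [starFun, geomPoly, eval_geom_sum]
  ring

theorem stmt_4 (n : ℕ) (hn : 1 ≤ n) (k : Fin n → ℕ) (hk : ∀ l, 1 ≤ k l) :
    ∀ s : ℝ, 1 < s → deriv (deriv (starFun n k)) s < 0 := by
  intro s hs
  have ht : 0 < s - 1 := sub_pos.mpr hs
  have hpos : ∀ l, 0 < (geomPoly (k l + 1)).eval (s - 1) := fun l =>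
    eval_geomPoly_pos (k l).succ_pos ht.le
  set g : ℝ → ℝ := fun t => ((n : ℝ) - 1) - t - ∑ l, ((geomPoly (k l + 1)).eval t)⁻¹
  have hshift : deriv (starFun n k) = fun s => deriv g (s - 1) := by
    rw [starFun_eq_comp_sub_one]
    exact funext (deriv_comp_sub_const g 1)
  rw [hshift, deriv_comp_sub_const,
    (hasDerivAt_deriv_const_sub_sub_sum_inv_eval _ _ _ fun l _ => (hpos l).ne').deriv,
    neg_neg_iff_pos]
  have : Nonempty (Fin n) := ⟨⟨0, hn⟩⟩
  exact sum_pos (fun l _ => div_pos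
    (sub_pos.mpr (mul_derivative_derivative_lt_two_mul_sq_geomPoly (hk l) ht))
    (pow_pos (hpos l) 3)) univ_nonempty
end

section
/- Let H be a complex Hilbert space, let P_1, …, P_m be orthogonal projections on H, and let α_1, …, α_m > 0 and λ ∈ ℝ be such that Σ_{j=1}^m α_j P_j = λ·I. If α_k = λ for some index k, then P_j P_k = P_k P_j = 0 for every j ≠ k; in particular P_k commutes with every P_j, j = 1, …, m. -/
open scoped ComplexInnerProductSpace in
theorem stmt_8 {H : Type*} [NormedAddCommGroup H] [InnerProductSpace ℂ H]
    [CompleteSpace H] (m : ℕ) (P : Fin m → H →L[ℂ] H)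
    (hsa : ∀ j, IsSelfAdjoint (P j)) (hproj : ∀ j, P j * P j = P j)
    (α : Fin m → ℝ) (hα : ∀ j, 0 < α j) (lam : ℝ)
    (hsum : ∑ j, (α j : ℂ) • P j = (lam : ℂ) • (1 : H →L[ℂ] H))
    (k : Fin m) (hk : α k = lam) :
    (∀ j, j ≠ k → P j ≠ 0 → P j * P k = 0 ∧ P k * P j = 0) ∧
      ∀ j, Commute (P k) (P j) := by
  have key : ∀ j, j ≠ k → P j * P k = 0 := by
    intro j hjk
    ext x
    simp only [ContinuousLinearMap.mul_apply, ContinuousLinearMap.zero_apply]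
    set y := P k x with hy
    have hky : P k y = y := by
      have := congrArg (fun T => T x) (hproj k)
      simpa [ContinuousLinearMap.mul_apply] using this
    have h1 : ∑ i, (α i : ℂ) • P i y = (lam : ℂ) • y := by
      have := congrArg (fun T => T y) hsum
      simpa [ContinuousLinearMap.sum_apply] using this
    have h2 : ∑ i ∈ Finset.univ.erase k, (α i : ℂ) • P i y = 0 := by
      rw [← Finset.add_sum_erase Finset.univ _ (Finset.mem_univ k)] at h1
      rw [hky, hk] at h1
      linear_combination (norm := module) h1
    have h3 : ∑ i ∈ Finset.univ.erase k, (α i : ℂ) * ⟪P i y, P i y⟫ = 0 := by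
      have := congrArg (fun z => ⟪z, y⟫) h2
      simp only [inner_zero_left, sum_inner, inner_smul_left, Complex.conj_ofReal] at this
      rw [← this]
      refine Finset.sum_congr rfl fun i _ => ?_
      congr 1
      have hadj : ∀ u v : H, ⟪P i u, v⟫ = ⟪u, P i v⟫ :=
        (ContinuousLinearMap.eq_adjoint_iff (P i) (P i)).mp (hsa i).adjoint_eq.symm
      have hPP : P i (P i y) = P i y := by
        have := congrArg (fun T => T y) (hproj i)
        simpa [ContinuousLinearMap.mul_apply] using this
      rw [hadj, hadj, hPP]
    have h4 : ∑ i ∈ Finset.univ.erase k, α i * ‖P i y‖ ^ 2 = 0 := by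
      have : ((∑ i ∈ Finset.univ.erase k, α i * ‖P i y‖ ^ 2 : ℝ) : ℂ) = 0 := by
        rw [← h3]
        push_cast
        refine Finset.sum_congr rfl fun i _ => ?_
        rw [inner_self_eq_norm_sq_to_K]
        rfl
      exact_mod_cast this
    have h5 := (Finset.sum_eq_zero_iff_of_nonneg (fun i _ =>
      mul_nonneg (hα i).le (sq_nonneg _))).mp h4 j (Finset.mem_erase.mpr ⟨hjk, Finset.mem_univ j⟩)
    have : ‖P j y‖ ^ 2 = 0 := by
      rcases mul_eq_zero.mp h5 with h | h
      · exact absurd h (hα j).ne'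
      · exact h
    simpa using pow_eq_zero_iff (n := 2) (by norm_num) |>.mp this
  have key2 : ∀ j, j ≠ k → P k * P j = 0 := by
    intro j hjk
    calc P k * P j = star (P j * P k) := by
          rw [star_mul, (hsa j).star_eq, (hsa k).star_eq]
      _ = 0 := by rw [key j hjk, star_zero]
  refine ⟨fun j hjk _ => ⟨key j hjk, key2 j hjk⟩, fun j => ?_⟩
  by_cases hjk : j = k
  · subst hjk; exact Commute.refl _
  · exact (key2 j hjk).trans (key j hjk).symm
end

section
/- Let n ≥ 1 and k_1, …, k_n ≥ 1 be integers, and suppose s ∈ [1, ∞) satisfies n − s = Σ_{l=1}^n 1/(1 + (s−1) + … + (s−1)^{k_l}). Define a_j^{(l)} = (s−1)^j / (1 + (s−1) + … + (s−1)^{k_l}) for j = 1, …, k_l and l = 1, …, n, and let ω(χ) = Σ_{l=1}^n Σ_{j=1}^{k_l} a_j^{(l)} α_j^{(l)} for a character χ = (α_j^{(l)}). Then ω is TS-invariant: for every character χ, setting λ = ω(χ), λ̃ = Σ_{l=1}^n α_{k_l}^{(l)} − λ, and χ̃ with entries χ̃_j^{(l)} = λ̃ − α_{k_l}^{(l)}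 + α_{j−1}^{(l)} (where α_0^{(l)} = 0), one has ω(χ̃) = λ̃. -/
open Finset

/-!
Write `t = s - 1` and `S_l = 1 + t + ⋯ + t^{k_l}`, so that `a_j^{(l)} = t^j / S_l`. On the branch `l`,
shifting the index in `∑_j t^j α_{j-1}` and using `t^{k_l+1} = (t - 1) S_l + 1` turns the
contribution of `χ̃` into `(1 - S_l⁻¹) λ̃ + t ω_l(χ) - t α_{k_l}`, where `ω_l` is the `l`-th branch
of `ω`. Summing over the branches and using `∑_l S_l⁻¹ = n - s`, the result is
`s λ̃ + t λ - t (λ̃ + λ) = λ̃`.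
-/

theorem sum_Icc_one_eq_sum_range {M : Type*} [AddCommMonoid M] (f : ℕ → M) (k : ℕ) :
    ∑ j ∈ Icc 1 k, f j = ∑ i ∈ range k, f (i + 1) := by
  rw [← Ico_add_one_right_eq_Icc, sum_Ico_eq_sum_range, Nat.add_sub_cancel]
  simp only [add_comm 1]

section Branch

variable {R : Type*} [CommRing R] (t : R) (k : ℕ)

theorem sum_Icc_one_pow : ∑ j ∈ Icc 1 k, t ^ j = ∑ i ∈ range (k + 1), t ^ i - 1 := by
  rw [sum_Icc_one_eq_sum_range, sum_range_succ', pow_zero, add_sub_cancel_right]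

theorem sum_Icc_one_pow_mul_pred {α : ℕ → R} (hα0 : α 0 = 0) :
    ∑ j ∈ Icc 1 k, t ^ j * α (j - 1) = t * ∑ j ∈ Icc 1 k, t ^ j * α j - t ^ (k + 1) * α k := by
  -- `∑_{i ≤ k} t^i α_i` peeled at the bottom (where `α 0 = 0`) and at the top
  have hsplit := (sum_range_succ' (fun i => t ^ i * α i) k).symm.trans
    (sum_range_succ (fun i => t ^ i * α i) k)
  simp only [hα0, mul_zero, add_zero] at hsplit
  simp only [sum_Icc_one_eq_sum_range, Nat.add_sub_cancel]
  rw [hsplit, mul_add, mul_sum]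
  simp only [pow_succ', mul_assoc]
  ring

end Branch

theorem sum_Icc_geom_weight_mul_TS_entry {K : Type*} [Field K] (t lam' : K) (k : ℕ)
    {α w : ℕ → K} (hα0 : α 0 = 0) (hS : ∑ i ∈ range (k + 1), t ^ i ≠ 0)
    (hw : ∀ j ∈ Icc 1 k, w j = t ^ j / ∑ i ∈ range (k + 1), t ^ i) :
    ∑ j ∈ Icc 1 k, w j * (lam' - α k + α (j - 1)) =
      (1 - (∑ i ∈ range (k + 1), t ^ i)⁻¹) * lam' + t * ∑ j ∈ Icc 1 k, w j * α j - t * α k := by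
  set S := ∑ i ∈ range (k + 1), t ^ i
  have htop : t ^ (k + 1) = (t - 1) * S + 1 := by
    rw [mul_comm, geom_sum_mul, sub_add_cancel]
  have hshifted : ∑ j ∈ Icc 1 k, w j * (lam' - α k + α (j - 1)) =
      ((∑ j ∈ Icc 1 k, t ^ j) * (lam' - α k) + ∑ j ∈ Icc 1 k, t ^ j * α (j - 1)) / S := by
    rw [sum_mul, ← sum_add_distrib, sum_div]
    exact sum_congr rfl fun j hj => by rw [hw j hj]; ring
  have hweighted : ∑ j ∈ Icc 1 k, w j * α j = (∑ j ∈ Icc 1 k, t ^ j * α j) / S := by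
    rw [sum_div]
    exact sum_congr rfl fun j hj => by rw [hw j hj]; ring
  rw [hshifted, hweighted, sum_Icc_one_pow, sum_Icc_one_pow_mul_pred _ _ hα0, htop]
  field_simp
  ring

theorem stmt_13_general (n : ℕ) (k : Fin n → ℕ)
    (s : ℝ) (hs : 1 ≤ s)
    (heq : (n : ℝ) - s = ∑ l, (∑ j ∈ Finset.range (k l + 1), (s - 1) ^ j)⁻¹)
    (a : Fin n → ℕ → ℝ)
    (ha : ∀ l, ∀ j ∈ Finset.Icc 1 (k l),
      a l j = (s - 1) ^ j / ∑ i ∈ Finset.range (k l + 1), (s - 1) ^ i)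
    -- `α` is a character: `α l 0 = 0` by convention and
    -- `0 = α l 0 < α l 1 < … < α l (k l)`.
    (α : Fin n → ℕ → ℝ) (hα0 : ∀ l, α l 0 = 0)
    (lam lam' : ℝ)
    (hlam : lam = ∑ l, ∑ j ∈ Finset.Icc 1 (k l), a l j * α l j)
    (hlam' : lam' = (∑ l, α l (k l)) - lam) :
    ∑ l, ∑ j ∈ Finset.Icc 1 (k l), a l j * (lam' - α l (k l) + α l (j - 1)) = lam' := by
  have hbranch : ∀ l, ∑ j ∈ Icc 1 (k l), a l j * (lam' - α l (k l) + α l (j - 1)) =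
      (1 - (∑ i ∈ range (k l + 1), (s - 1) ^ i)⁻¹) * lam'
        + (s - 1) * ∑ j ∈ Icc 1 (k l), a l j * α l j - (s - 1) * α l (k l) := by
    intro l
    have hS : ∑ i ∈ range (k l + 1), (s - 1) ^ i ≠ 0 :=
      (geom_sum_pos (by linarith) (Nat.succ_ne_zero _)).ne'
    exact sum_Icc_geom_weight_mul_TS_entry _ _ _ (hα0 l) hS (ha l)
  rw [sum_congr rfl fun l _ => hbranch l, sum_sub_distrib, sum_add_distrib, ← sum_mul,
    ← mul_sum, ← mul_sum, sum_sub_distrib, ← heq, ← hlam]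
  simp only [sum_const, card_univ, Fintype.card_fin, nsmul_eq_mul, mul_one]
  linear_combination (s - 1) * hlam'

theorem stmt_13 (n : ℕ) (hn : 1 ≤ n) (k : Fin n → ℕ) (hk : ∀ l, 1 ≤ k l)
    (s : ℝ) (hs : 1 ≤ s)
    (heq : (n : ℝ) - s = ∑ l, (∑ j ∈ Finset.range (k l + 1), (s - 1) ^ j)⁻¹)
    (a : Fin n → ℕ → ℝ)
    (ha : ∀ l, ∀ j ∈ Finset.Icc 1 (k l),
      a l j = (s - 1) ^ j / ∑ i ∈ Finset.range (k l + 1), (s - 1) ^ i)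
    -- `α` is a character: `α l 0 = 0` by convention and
    -- `0 = α l 0 < α l 1 < … < α l (k l)`.
    (α : Fin n → ℕ → ℝ) (hα0 : ∀ l, α l 0 = 0)
    (hαmono : ∀ l, ∀ j < k l, α l j < α l (j + 1))
    (lam lam' : ℝ)
    (hlam : lam = ∑ l, ∑ j ∈ Finset.Icc 1 (k l), a l j * α l j)
    (hlam' : lam' = (∑ l, α l (k l)) - lam) :
    ∑ l, ∑ j ∈ Finset.Icc 1 (k l), a l j * (lam' - α l (k l) + α l (j - 1)) = lam' :=
  stmt_13_general n k s hs heq a ha α hα0 lam lam' hlam hlam'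
end

section
/- Let n ≥ 1 and k_1, …, k_n ≥ 1 be integers, and let ω(χ) = Σ_{l=1}^n Σ_{j=1}^{k_l} a_j^{(l)} α_j^{(l)} be a linear functional with nonnegative coefficients a_j^{(l)} ≥ 0 on the set of characters of the associated star-shaped graph. If ω is TS-invariant, then there exists s ∈ [1, ∞) with n − s = Σ_{l=1}^n 1/(1 + (s−1) + … + (s−1)^{k_l}) such that a_j^{(l)} = (s−1)^j / (1 + (s−1) + … + (s−1)^{k_l}) for all j = 1, …, k_l and l = 1, …, n. -/
private lemma aux_sum (n : ℕ) (k : Fin n → ℕ) (a : Fin n → ℕ → ℝ)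
    (A B : Fin n → ℕ → ℝ) (LA LB : ℝ)
    (h1 : (∑ l, ∑ j ∈ Finset.Icc 1 (k l),
        a l j * (LA - A l (k l) + A l (j - 1))) = LA)
    (h2 : (∑ l, ∑ j ∈ Finset.Icc 1 (k l),
        a l j * (LB - B l (k l) + B l (j - 1))) = LB) :
    (∑ l, ∑ j ∈ Finset.Icc 1 (k l), a l j) * (LB - LA)
      - (∑ l, (∑ j ∈ Finset.Icc 1 (k l), a l j) * (B l (k l) - A l (k l)))
      + (∑ l, ∑ j ∈ Finset.Icc 1 (k l), a l j * (B l (j - 1) - A l (j - 1)))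
      = LB - LA := by
  have h3 : (∑ l, ∑ j ∈ Finset.Icc 1 (k l),
      (a l j * (LB - B l (k l) + B l (j - 1))
        - a l j * (LA - A l (k l) + A l (j - 1)))) = LB - LA := by
    simp only [Finset.sum_sub_distrib]
    rw [h1, h2]
  have h5 : (∑ l, ∑ j ∈ Finset.Icc 1 (k l),
      (a l j * (LB - LA) - a l j * (B l (k l) - A l (k l))
        + a l j * (B l (j - 1) - A l (j - 1)))) = LB - LA := by
    refine Eq.trans ?_ h3
    exact Finset.sum_congr rfl fun l _ => Finset.sum_congr rfl fun j _ => by ring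
  simp only [Finset.sum_add_distrib, Finset.sum_sub_distrib, ← Finset.sum_mul] at h5
  exact h5

theorem stmt_14 (n : ℕ) (hn : 1 ≤ n) (k : Fin n → ℕ) (hk : ∀ l, 1 ≤ k l)
    (a : Fin n → ℕ → ℝ) (ha : ∀ l, ∀ j ∈ Finset.Icc 1 (k l), 0 ≤ a l j)
    -- TS-invariance of `ω(χ) = ∑_l ∑_{j=1}^{k_l} a_j^{(l)} α_j^{(l)}`:
    -- a character `α` satisfies `α l 0 = 0` (convention) and
    -- `0 = α l 0 < α l 1 < … < α l (k l)`.
    (hinv : ∀ α : Fin n → ℕ → ℝ, (∀ l, α l 0 = 0) →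
      (∀ l, ∀ j < k l, α l j < α l (j + 1)) →
      ∀ lam lam' : ℝ,
        lam = (∑ l, ∑ j ∈ Finset.Icc 1 (k l), a l j * α l j) →
        lam' = (∑ l, α l (k l)) - lam →
        (∑ l, ∑ j ∈ Finset.Icc 1 (k l),
          a l j * (lam' - α l (k l) + α l (j - 1))) = lam') :
    ∃ s : ℝ, 1 ≤ s ∧
      (n : ℝ) - s = (∑ l, (∑ j ∈ Finset.range (k l + 1), (s - 1) ^ j)⁻¹) ∧
      ∀ l, ∀ j ∈ Finset.Icc 1 (k l),
        a l j = (s - 1) ^ j / ∑ i ∈ Finset.range (k l + 1), (s - 1) ^ i := by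
  classical
  set s : ℝ := ∑ l, ∑ j ∈ Finset.Icc 1 (k l), a l j with hs
  have key : ∀ l0 : Fin n, ∀ i ∈ Finset.Icc 1 (k l0),
      (s - 1) * ((if k l0 = i then (1:ℝ) else 0) - a l0 i)
        = (if k l0 = i then ∑ j ∈ Finset.Icc 1 (k l0), a l0 j else 0)
          - (if i + 1 ≤ k l0 then a l0 (i + 1) else 0) := by
    intro l0 i hi
    rw [Finset.mem_Icc] at hi
    set δ : Fin n → ℕ → ℝ := fun l j => if l = l0 ∧ j = i then (1/2 : ℝ) else 0 with hδ
    set α : Fin n → ℕ → ℝ := fun _ j => (j : ℝ) with hα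
    set β : Fin n → ℕ → ℝ := fun l j => (j : ℝ) + δ l j with hβ
    have hβα : ∀ l m, β l m - α l m = δ l m := by
      intro l m; simp [hβ, hα]
    have hα0 : ∀ l, α l 0 = 0 := by intro l; simp [hα]
    have hαm : ∀ l, ∀ j, j < k l → α l j < α l (j + 1) := by
      intro l j _; simp only [hα]; exact_mod_cast Nat.lt_succ_self j
    have hβ0 : ∀ l, β l 0 = 0 := by
      intro l
      have h0 : ¬ (l = l0 ∧ (0:ℕ) = i) := by rintro ⟨-, h⟩; omega
      simp [hβ, hδ, h0]
    have hβm : ∀ l, ∀ j, j < k l → β l j < β l (j + 1) := by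
      intro l j _
      simp only [hβ, hδ]
      push_cast
      split_ifs <;> linarith
    have h1 := hinv α hα0 hαm _ _ rfl rfl
    have h2 := hinv β hβ0 hβm _ _ rfl rfl
    -- sums of δ
    have hδsum : (∑ l, ∑ j ∈ Finset.Icc 1 (k l), a l j * δ l j) = a l0 i * (1/2) := by
      have inner : ∀ l : Fin n, (∑ j ∈ Finset.Icc 1 (k l), a l j * δ l j)
          = if l = l0 then a l0 i * (1/2) else 0 := by
        intro l
        by_cases hl : l = l0
        · subst hl
          rw [if_pos rfl]
          simp only [hδ, eq_self_iff_true, true_and, mul_ite, mul_zero]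
          rw [Finset.sum_ite_eq' (Finset.Icc 1 (k l)) i (fun j => a l j * (1/2)),
            if_pos (Finset.mem_Icc.mpr hi)]
        · simp [hδ, hl]
      rw [Finset.sum_congr rfl fun l _ => inner l,
        Finset.sum_ite_eq' Finset.univ l0 (fun _ => a l0 i * (1/2)),
        if_pos (Finset.mem_univ l0)]
    have hδtop : (∑ l, δ l (k l)) = if k l0 = i then (1/2:ℝ) else 0 := by
      have inner : ∀ l : Fin n, δ l (k l)
          = if l = l0 then (if k l0 = i then (1/2:ℝ) else 0) else 0 := by
        intro l
        by_cases hl : l = l0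
        · subst hl; by_cases hkk : k l = i <;> simp [hδ, hkk]
        · simp [hδ, hl]
      rw [Finset.sum_congr rfl fun l _ => inner l,
        Finset.sum_ite_eq' Finset.univ l0 (fun _ => _), if_pos (Finset.mem_univ l0)]
    have e1 : (∑ l, (∑ j ∈ Finset.Icc 1 (k l), a l j) * (β l (k l) - α l (k l)))
        = if k l0 = i then (∑ j ∈ Finset.Icc 1 (k l0), a l0 j) * (1/2) else 0 := by
      have inner : ∀ l : Fin n, (∑ j ∈ Finset.Icc 1 (k l), a l j) * (β l (k l) - α l (k l))
          = if l = l0 then (if k l0 = i then (∑ j ∈ Finset.Icc 1 (k l0), a l0 j) * (1/2) else 0) else 0 := by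
        intro l
        rw [hβα l (k l)]
        by_cases hl : l = l0
        · subst hl
          by_cases hkk : k l = i <;> simp [hδ, hkk]
        · simp [hδ, hl]
      rw [Finset.sum_congr rfl fun l _ => inner l,
        Finset.sum_ite_eq' Finset.univ l0 (fun _ => _), if_pos (Finset.mem_univ l0)]
    have e2 : (∑ l, ∑ j ∈ Finset.Icc 1 (k l), a l j * (β l (j - 1) - α l (j - 1)))
        = if i + 1 ≤ k l0 then a l0 (i + 1) * (1/2) else 0 := by
      have inner : ∀ l : Fin n, (∑ j ∈ Finset.Icc 1 (k l), a l j * (β l (j - 1) - α l (j - 1)))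
          = if l = l0 then (if i + 1 ≤ k l0 then a l0 (i + 1) * (1/2) else 0) else 0 := by
        intro l
        have hterm : ∀ j ∈ Finset.Icc 1 (k l),
            a l j * (β l (j - 1) - α l (j - 1))
              = if j = i + 1 then (if l = l0 then a l j * (1/2) else 0) else 0 := by
          intro j hj
          rw [Finset.mem_Icc] at hj
          rw [hβα l (j - 1)]
          simp only [hδ]
          by_cases h1' : j = i + 1
          · subst h1'
            by_cases h2' : l = l0
            · rw [if_pos ⟨h2', by omega⟩, if_pos rfl, if_pos h2']
            · rw [if_neg (by tauto), mul_zero, if_pos rfl, if_neg h2']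
          · rw [if_neg (by rintro ⟨-, hc⟩; omega), mul_zero, if_neg h1']
        rw [Finset.sum_congr rfl hterm, Finset.sum_ite_eq' (Finset.Icc 1 (k l)) (i+1)]
        by_cases hl : l = l0
        · subst hl
          by_cases hik : i + 1 ≤ k l <;> simp [Finset.mem_Icc, hik]
        · simp [hl]
      rw [Finset.sum_congr rfl fun l _ => inner l,
        Finset.sum_ite_eq' Finset.univ l0 (fun _ => _), if_pos (Finset.mem_univ l0)]
    have hSd : (∑ l, ∑ j ∈ Finset.Icc 1 (k l), a l j * β l j)
        = (∑ l, ∑ j ∈ Finset.Icc 1 (k l), a l j * α l j) + a l0 i * (1/2) := by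
      rw [← hδsum, ← Finset.sum_add_distrib]
      refine Finset.sum_congr rfl fun l _ => ?_
      rw [← Finset.sum_add_distrib]
      refine Finset.sum_congr rfl fun j _ => ?_
      have : β l j = α l j + δ l j := by simp [hβ, hα]
      rw [this]; ring
    have hTd : (∑ l, β l (k l)) = (∑ l, α l (k l)) + (if k l0 = i then (1/2:ℝ) else 0) := by
      rw [← hδtop, ← Finset.sum_add_distrib]
    have haux := aux_sum n k a α β _ _ h1 h2
    rw [e1, e2, hSd, hTd, ← hs] at haux
    have hD : ((∑ l, α l (k l)) + (if k l0 = i then (1/2:ℝ) else 0)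
          - ((∑ l, ∑ j ∈ Finset.Icc 1 (k l), a l j * α l j) + a l0 i * (1/2)))
        - ((∑ l, α l (k l)) - (∑ l, ∑ j ∈ Finset.Icc 1 (k l), a l j * α l j))
        = (if k l0 = i then (1/2:ℝ) else 0) - a l0 i * (1/2) := by ring
    rw [hD] at haux
    split_ifs at haux ⊢ <;> linear_combination 2 * haux
  have hrec : ∀ l : Fin n, ∀ i, 1 ≤ i → i < k l → a l (i + 1) = (s - 1) * a l i := by
    intro l i h1 h2
    have h := key l i (Finset.mem_Icc.mpr ⟨h1, le_of_lt h2⟩)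
    rw [if_neg (by omega), if_neg (by omega), if_pos (by omega)] at h
    linarith
  have hend : ∀ l : Fin n, (s - 1) * (1 - a l (k l)) = ∑ j ∈ Finset.Icc 1 (k l), a l j := by
    intro l
    have h := key l (k l) (Finset.mem_Icc.mpr ⟨hk l, le_refl _⟩)
    rw [if_pos rfl, if_pos rfl, if_neg (by omega)] at h
    linarith
  have hpow : ∀ l : Fin n, ∀ m, m + 1 ≤ k l → a l (m + 1) = (s - 1) ^ m * a l 1 := by
    intro l m
    induction m with
    | zero => intro _; simp
    | succ p ih =>
      intro h
      have e1 : a l (p + 1) = (s - 1) ^ p * a l 1 := ih (by omega)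
      have e2 : a l (p + 1 + 1) = (s - 1) * a l (p + 1) := hrec l (p + 1) (by omega) (by omega)
      rw [e2, e1, pow_succ]; ring
  have hAl : ∀ l : Fin n, (∑ j ∈ Finset.Icc 1 (k l), a l j)
      = (∑ m ∈ Finset.range (k l), (s - 1) ^ m) * a l 1 := by
    intro l
    have hre : ∀ N : ℕ, N ≤ k l → (∑ j ∈ Finset.Icc 1 N, a l j) = ∑ m ∈ Finset.range N, a l (m + 1) := by
      intro N
      induction N with
      | zero => intro _; simp
      | succ p ih =>
        intro hN
        rw [Finset.sum_Icc_succ_top (by omega), ih (by omega), Finset.sum_range_succ]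
    rw [hre (k l) le_rfl, Finset.sum_mul]
    refine Finset.sum_congr rfl fun m hm => ?_
    rw [Finset.mem_range] at hm
    rw [hpow l m (by omega)]
  have hAlnn : ∀ l : Fin n, 0 ≤ ∑ j ∈ Finset.Icc 1 (k l), a l j :=
    fun l => Finset.sum_nonneg fun j hj => ha l j hj
  have hs0 : 0 ≤ s := hs ▸ Finset.sum_nonneg fun l _ => hAlnn l
  have hs1 : 1 ≤ s := by
    by_contra hcon
    push_neg at hcon
    set l0 : Fin n := ⟨0, hn⟩
    have h := hend l0
    have hak : 1 ≤ a l0 (k l0) := by nlinarith [hAlnn l0]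
    have h2 : a l0 (k l0) ≤ ∑ j ∈ Finset.Icc 1 (k l0), a l0 j :=
      Finset.single_le_sum (fun j hj => ha l0 j hj)
        (Finset.mem_Icc.mpr ⟨hk l0, le_refl _⟩)
    have h3 : (∑ j ∈ Finset.Icc 1 (k l0), a l0 j) ≤ s := by
      rw [hs]
      exact Finset.single_le_sum (fun l _ => hAlnn l) (Finset.mem_univ l0)
    linarith
  have hgpos : ∀ l : Fin n, 0 < ∑ i ∈ Finset.range (k l + 1), (s - 1) ^ i := by
    intro l
    have h1 : (s - 1) ^ 0 ≤ ∑ i ∈ Finset.range (k l + 1), (s - 1) ^ i :=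
      Finset.single_le_sum (fun i _ => pow_nonneg (by linarith) i)
        (Finset.mem_range.mpr (Nat.succ_pos _))
    rw [pow_zero] at h1
    linarith
  have hstar : ∀ l : Fin n, s - 1 = a l 1 * ∑ i ∈ Finset.range (k l + 1), (s - 1) ^ i := by
    intro l
    have hk' : k l - 1 + 1 = k l := by have := hk l; omega
    have e1 : a l (k l) = (s - 1) ^ (k l - 1) * a l 1 := by
      have := hpow l (k l - 1) (by have := hk l; omega)
      rwa [hk'] at this
    have e2 : (s - 1) * (s - 1) ^ (k l - 1) = (s - 1) ^ (k l) := by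
      rw [← pow_succ', hk']
    have h := hend l
    rw [hAl l, e1] at h
    rw [Finset.sum_range_succ]
    linear_combination h + a l 1 * e2
  have ha1 : ∀ l : Fin n, a l 1 = (s - 1) / ∑ i ∈ Finset.range (k l + 1), (s - 1) ^ i := by
    intro l
    rw [eq_div_iff (ne_of_gt (hgpos l))]
    linarith [hstar l]
  refine ⟨s, hs1, ?_, ?_⟩
  · have hAl2 : ∀ l : Fin n, (∑ j ∈ Finset.Icc 1 (k l), a l j)
        = 1 - (∑ i ∈ Finset.range (k l + 1), (s - 1) ^ i)⁻¹ := by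
      intro l
      have hG : (∑ i ∈ Finset.range (k l + 1), (s - 1) ^ i)
          = (s - 1) * (∑ i ∈ Finset.range (k l), (s - 1) ^ i) + 1 := geom_sum_succ
      have hGne : (∑ i ∈ Finset.range (k l + 1), (s - 1) ^ i) ≠ 0 := ne_of_gt (hgpos l)
      rw [hAl l, ha1 l]
      field_simp
      linear_combination -hG
    have h6 : s = ∑ l, (1 - (∑ i ∈ Finset.range (k l + 1), (s - 1) ^ i)⁻¹) :=
      hs.trans (Finset.sum_congr rfl fun l _ => hAl2 l)
    have h7 : (∑ l, (1 - (∑ i ∈ Finset.range (k l + 1), (s - 1) ^ i)⁻¹))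
        = (n : ℝ) - ∑ l, (∑ i ∈ Finset.range (k l + 1), (s - 1) ^ i)⁻¹ := by
      rw [Finset.sum_sub_distrib, Finset.sum_const, Finset.card_univ, Fintype.card_fin]
      simp [nsmul_eq_mul]
    linarith [h6.trans h7]
  · intro l j hj
    rw [Finset.mem_Icc] at hj
    have hj' : j - 1 + 1 = j := by omega
    have e1 : a l j = (s - 1) ^ (j - 1) * a l 1 := by
      have := hpow l (j - 1) (by omega)
      rwa [hj'] at this
    have e2 : (s - 1) ^ (j - 1) * (s - 1) = (s - 1) ^ j := by
      rw [← pow_succ]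
      congr 1
    rw [e1, ha1 l, mul_div_assoc', e2]
end

section
/- (Rigidity corollary, case D̃4.) Let d ≥ 1 and let P_1, P_2, P_3, P_4 be complex d×d matrices that are orthogonal projections (P_l = P_l* = P_l²), let α_1, α_2, α_3, α_4 > 0 and λ ∈ ℝ satisfy α_1 P_1 + α_2 P_2 + α_3 P_3 + α_4 P_4 = λ·I_d with λ ≠ (α_1 + α_2 + α_3 + α_4)/2. If the family (P_1, P_2, P_3, P_4) is irreducible (the only subspaces of ℂ^d invariant under all four matrices are {0} and ℂ^d), then the rigidity index equals 2: d²(2 − 4) + Σ_{l=1}^4 dim_ℂ {X ∈ M_d(ℂ) : X P_l = P_l X} = 2. -/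
/-!
Put `A l = α l • P l`, so that `∑ A l = λ • 1`. In the complex `Mat_d → ⊕_l [A l, Mat_d] → Mat_d`,
`X ↦ ([X, A l])_l` followed by summation, the composite is `[X, ∑ A l] = 0`, the first map has
kernel the joint centralizer `Z`, and by trace duality the image of the second has codimension at
most `dim Z`. Counting dimensions gives `∑_l dim Z(A l) ≤ (k - 2) d² + 2 dim Z` for any `k`
matrices with scalar sum, and here `dim Z = 1` by Schur's lemma. The centralizer of a projection
of rank `r` has dimension `r² + (d - r)²` (the trace of the projection `X ↦ AXA + (1 - A)X(1 - A)`
onto it), so the bound reads `∑_l (2 r_l - d)² ≤ 4`. The integers `2 r_l - d` all have the parity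
of `d` and do not all vanish, since otherwise taking traces gives `λ = (∑ α l) / 2`; so the sum is
exactly `4`.
-/

open Module LinearMap

section Centralizer

variable {K R : Type*} [Field K] [Ring R] [Algebra K R]

lemma Subalgebra.mem_centralizer_singleton_iff {a x : R} :
    x ∈ Subalgebra.centralizer K {a} ↔ a * x = x * a := by
  simp [Subalgebra.mem_centralizer_iff]

lemma Subalgebra.centralizer_singleton_smul {c : K} (hc : c ≠ 0) (a : R) :
    Subalgebra.centralizer K {c • a} = Subalgebra.centralizer K {a} := by
  ext x
  simp only [mem_centralizer_singleton_iff, smul_mul_assoc, mul_smul_comm, smul_right_inj hc]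

variable (K) in
def commutatorMap (a : R) : R →ₗ[K] R :=
  mulRight K a - mulLeft K a

@[simp] lemma commutatorMap_apply (a x : R) : commutatorMap K a x = x * a - a * x := rfl

lemma ker_commutatorMap (a : R) :
    ker (commutatorMap K a) = Subalgebra.toSubmodule (Subalgebra.centralizer K {a}) := by
  ext x
  rw [mem_ker, commutatorMap_apply, sub_eq_zero, Subalgebra.mem_toSubmodule,
    Subalgebra.mem_centralizer_singleton_iff, eq_comm]

end Centralizer

variable {K : Type*} [Field K] {n : Type*} [Fintype n]

def Matrix.IsIrreducibleFamily {ι : Type*} (A : ι → Matrix n n K) : Prop :=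
  ∀ W : Submodule K (n → K), (∀ i, ∀ x ∈ W, (A i).mulVec x ∈ W) → W = ⊥ ∨ W = ⊤

lemma Matrix.IsIrreducibleFamily.smul {ι : Type*} {A : ι → Matrix n n K}
    (hA : IsIrreducibleFamily A) {c : ι → K} (hc : ∀ i, c i ≠ 0) :
    IsIrreducibleFamily fun i => c i • A i := by
  refine fun W hW => hA W fun i x hx => ?_
  have h := W.smul_mem (c i)⁻¹ (hW i x hx)
  rwa [Matrix.smul_mulVec, inv_smul_smul₀ (hc i)] at h

variable [DecidableEq n]

theorem Matrix.IsIrreducibleFamily.centralizer_eq_bot [IsAlgClosed K] [Nonempty n] {ι : Type*}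
    {A : ι → Matrix n n K} (hA : IsIrreducibleFamily A) :
    Subalgebra.centralizer K (Set.range A) = ⊥ := by
  refine eq_bot_iff.2 fun X hX => ?_
  obtain ⟨μ, hμ⟩ := Module.End.exists_eigenvalue (toLin' X)
  have hinv : ∀ i, ∀ v ∈ Module.End.eigenspace (toLin' X) μ,
      (A i).mulVec v ∈ Module.End.eigenspace (toLin' X) μ := by
    intro i v hv
    rw [Module.End.mem_eigenspace_iff, toLin'_apply] at hv ⊢
    rw [mulVec_mulVec, ← hX (A i) ⟨i, rfl⟩, ← mulVec_mulVec, hv, mulVec_smul]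
  have htop := (hA _ hinv).resolve_left hμ
  refine Algebra.mem_bot.2 ⟨μ, toLin'.injective (LinearMap.ext fun v => ?_)⟩
  have hv : v ∈ Module.End.eigenspace (toLin' X) μ := htop ▸ Submodule.mem_top
  rw [Module.End.mem_eigenspace_iff] at hv
  rw [hv, Algebra.algebraMap_eq_smul_one, map_smul, toLin'_one, LinearMap.smul_apply, id_apply]

section Idempotent

lemma Matrix.trace_eq_rank_of_isIdempotentElem {A : Matrix n n K} (hA : IsIdempotentElem A) :
    A.trace = A.rank := by
  have hproj : IsIdempotentElem (toLin' A) := hA.map Matrix.toLinAlgEquiv'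
  rw [Matrix.rank, ← toLin'_apply', ← hproj.isProj_range.trace, Matrix.trace_toLin'_eq]

lemma Matrix.rank_add_rank_one_sub_of_isIdempotentElem [CharZero K] {A : Matrix n n K}
    (hA : IsIdempotentElem A) : A.rank + (1 - A).rank = Fintype.card n := by
  have h := Matrix.trace_one (n := n) (R := K)
  rw [← add_sub_cancel A 1, Matrix.trace_add, trace_eq_rank_of_isIdempotentElem hA,
    trace_eq_rank_of_isIdempotentElem hA.one_sub] at h
  exact_mod_cast h

lemma Matrix.trace_mulLeft_comp_mulRight (A B : Matrix n n K) :
    LinearMap.trace K _ (mulLeft K A ∘ₗ mulRight K B) = A.trace * B.trace := by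
  rw [trace_eq_matrix_trace K (Matrix.stdBasis K n n), Matrix.trace, Matrix.trace, Matrix.trace,
    Finset.sum_mul_sum, ← Finset.sum_product']
  refine Finset.sum_congr rfl fun p _ => ?_
  simp [toMatrix_apply, Matrix.stdBasis, Basis.repr_reindex, Matrix.mul_apply, Pi.single_apply,
    ite_apply]

lemma Matrix.isProj_centralizer_of_isIdempotentElem {A : Matrix n n K} (hA : IsIdempotentElem A) :
    IsProj (Subalgebra.toSubmodule (Subalgebra.centralizer K {A}))
      (mulLeft K A ∘ₗ mulRight K A + mulLeft K (1 - A) ∘ₗ mulRight K (1 - A)) := by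
  have hA' : A * A = A := hA.eq
  constructor
  · intro X
    have hAQ : A * (1 - A) = 0 := by rw [mul_sub, mul_one, hA', sub_self]
    have hQA : (1 - A) * A = 0 := by rw [sub_mul, one_mul, hA', sub_self]
    simp only [Subalgebra.mem_toSubmodule, Subalgebra.mem_centralizer_singleton_iff,
      LinearMap.add_apply, LinearMap.comp_apply, mulLeft_apply, mulRight_apply]
    simp only [mul_add, ← mul_assoc, hA', hAQ, zero_mul, add_zero]
    simp only [add_mul, mul_assoc, hA', hQA, mul_zero, add_zero]
  · intro X hX
    rw [Subalgebra.mem_toSubmodule, Subalgebra.mem_centralizer_singleton_iff] at hX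
    simp only [LinearMap.add_apply, LinearMap.comp_apply, mulLeft_apply, mulRight_apply]
    calc A * (X * A) + (1 - A) * (X * (1 - A)) = X * (A * A) + X * ((1 - A) * (1 - A)) := by
          simp only [← mul_assoc, hX, mul_sub, sub_mul, mul_one, one_mul]
      _ = X := by rw [hA', hA.one_sub.eq, ← mul_add, add_sub_cancel, mul_one]

theorem Matrix.finrank_centralizer_of_isIdempotentElem [CharZero K] {A : Matrix n n K}
    (hA : IsIdempotentElem A) :
    finrank K (Subalgebra.centralizer K {A}) = A.rank ^ 2 + (1 - A).rank ^ 2 := by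
  have h := (isProj_centralizer_of_isIdempotentElem hA).trace
  rw [map_add, trace_mulLeft_comp_mulRight, trace_mulLeft_comp_mulRight,
    trace_eq_rank_of_isIdempotentElem hA, trace_eq_rank_of_isIdempotentElem hA.one_sub,
    Subalgebra.finrank_toSubmodule] at h
  rw [sq, sq]
  exact_mod_cast h.symm

lemma Matrix.exists_rank_ne_rank_one_sub [CharZero K] [Nonempty n] {ι : Type*} [Fintype ι]
    {P : ι → Matrix n n K} (hP : ∀ i, IsIdempotentElem (P i)) {α : ι → K} {c : K}
    (hsum : ∑ i, α i • P i = c • 1) (hc : c ≠ (∑ i, α i) / 2) :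
    ∃ i, (P i).rank ≠ (1 - P i).rank := by
  by_contra! h
  have htrace : ∀ i, (P i).trace = Fintype.card n / 2 := fun i => by
    rw [trace_eq_rank_of_isIdempotentElem (hP i), eq_div_iff two_ne_zero,
      ← rank_add_rank_one_sub_of_isIdempotentElem (hP i), h i]
    push_cast
    ring
  have hcard : (Fintype.card n : K) ≠ 0 := Nat.cast_ne_zero.2 Fintype.card_ne_zero
  have := congrArg Matrix.trace hsum
  simp only [Matrix.trace_sum, Matrix.trace_smul, htrace, Matrix.trace_one, smul_eq_mul,
    ← Finset.sum_mul] at this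
  apply hc
  rw [eq_div_iff two_ne_zero]
  apply mul_right_cancel₀ hcard
  linear_combination -2 * this

end Idempotent

def Matrix.tracePairing : Matrix n n K →ₗ[K] Module.Dual K (Matrix n n K) :=
  (LinearMap.mul K (Matrix n n K)).compr₂ (Matrix.traceLinearMap n K K)

@[simp] lemma Matrix.tracePairing_apply (Y X : Matrix n n K) :
    tracePairing Y X = (Y * X).trace := rfl

lemma Matrix.tracePairing_injective :
    Function.Injective (tracePairing : Matrix n n K →ₗ[K] _) :=
  fun Y Z h => ext_iff_trace_mul_right.2 fun X => by
    simpa using congrArg (fun φ : Module.Dual K (Matrix n n K) => φ X) h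

lemma Matrix.tracePairing_surjective :
    Function.Surjective (tracePairing : Matrix n n K →ₗ[K] _) :=
  (injective_iff_surjective_of_finrank_eq_finrank Subspace.dual_finrank_eq.symm).1
    tracePairing_injective

lemma Matrix.commute_of_trace_mul_commutatorMap_eq_zero {B Y : Matrix n n K}
    (h : ∀ X, (Y * commutatorMap K B X).trace = 0) : B * Y = Y * B := by
  refine Matrix.ext_iff_trace_mul_right.2 fun X => ?_
  have hX := h X
  rw [commutatorMap_apply, mul_sub, Matrix.trace_sub, sub_eq_zero] at hX
  calc (B * Y * X).trace = (Y * (X * B)).trace := by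
          rw [← mul_assoc]; exact (Matrix.trace_mul_cycle Y X B).symm
    _ = (Y * (B * X)).trace := hX
    _ = (Y * B * X).trace := by rw [mul_assoc]

section CommutatorComplex

variable {ι : Type*} (A : ι → Matrix n n K)

def commutatorTuple : Matrix n n K →ₗ[K] ((i : ι) → range (commutatorMap K (A i))) :=
  LinearMap.pi fun i => (commutatorMap K (A i)).rangeRestrict

lemma ker_commutatorTuple :
    ker (commutatorTuple A) = Subalgebra.toSubmodule (Subalgebra.centralizer K (Set.range A)) := by
  ext X
  simp [commutatorTuple, LinearMap.ker_pi, Subalgebra.mem_centralizer_iff, sub_eq_zero, eq_comm]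

variable [Fintype ι]

def sumCommutators : ((i : ι) → range (commutatorMap K (A i))) →ₗ[K] Matrix n n K :=
  ∑ i, (range (commutatorMap K (A i))).subtype ∘ₗ LinearMap.proj i

@[simp] lemma sumCommutators_apply (b : (i : ι) → range (commutatorMap K (A i))) :
    sumCommutators A b = ∑ i, (b i : Matrix n n K) := by
  simp [sumCommutators]

lemma sumCommutators_comp_commutatorTuple {c : K} (hsum : ∑ i, A i = c • 1) :
    sumCommutators A ∘ₗ commutatorTuple A = 0 := by
  ext1 X
  simp [commutatorTuple, Finset.sum_sub_distrib, ← Finset.mul_sum, ← Finset.sum_mul, hsum]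

lemma dualAnnihilator_range_sumCommutators_le :
    (range (sumCommutators A)).dualAnnihilator ≤
      (Subalgebra.toSubmodule (Subalgebra.centralizer K (Set.range A))).map
        Matrix.tracePairing := by
  classical
  intro φ hφ
  obtain ⟨Y, rfl⟩ := Matrix.tracePairing_surjective φ
  refine ⟨Y, ?_, rfl⟩
  rintro _ ⟨i, rfl⟩
  refine Matrix.commute_of_trace_mul_commutatorMap_eq_zero fun X => ?_
  have hmem : commutatorMap K (A i) X ∈ range (sumCommutators A) :=
    ⟨Pi.single i ⟨_, mem_range_self _ X⟩, by
      rw [sumCommutators_apply, Finset.sum_eq_single i (fun j _ hj => by simp [hj]) (by simp),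
        Pi.single_eq_same]⟩
  simpa using (Submodule.mem_dualAnnihilator _).1 hφ _ hmem

theorem sum_finrank_centralizer_add_le {c : K} (hsum : ∑ i, A i = c • 1) :
    ∑ i, finrank K (Subalgebra.centralizer K {A i}) + 2 * Fintype.card n ^ 2 ≤
      Fintype.card ι * Fintype.card n ^ 2 +
        2 * finrank K (Subalgebra.centralizer K (Set.range A)) := by
  have hM : finrank K (Matrix n n K) = Fintype.card n ^ 2 := by
    rw [Module.finrank_matrix, Module.finrank_self, mul_one, sq]
  have hker : finrank K (range (commutatorTuple A)) +
      finrank K (Subalgebra.centralizer K (Set.range A)) = Fintype.card n ^ 2 := by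
    rw [← hM, ← finrank_range_add_finrank_ker (commutatorTuple A), ker_commutatorTuple,
      Subalgebra.finrank_toSubmodule]
  have hcoker : Fintype.card n ^ 2 ≤ finrank K (range (sumCommutators A)) +
      finrank K (Subalgebra.centralizer K (Set.range A)) := by
    rw [← hM, ← Subspace.finrank_add_finrank_dualAnnihilator_eq (range (sumCommutators A)),
      ← Subalgebra.finrank_toSubmodule]
    gcongr
    exact (Submodule.finrank_mono (dualAnnihilator_range_sumCommutators_le A)).trans
      (Submodule.finrank_map_le _ _)
  have hcomplex : finrank K (range (commutatorTuple A)) + finrank K (range (sumCommutators A)) ≤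
      ∑ i, finrank K (range (commutatorMap K (A i))) := by
    rw [← Module.finrank_pi_fintype, ← finrank_range_add_finrank_ker (sumCommutators A), add_comm]
    gcongr
    exact Submodule.finrank_mono
      (range_le_ker_iff.2 (sumCommutators_comp_commutatorTuple A hsum))
  have hrank := Finset.sum_congr rfl fun i (_ : i ∈ Finset.univ) =>
    show finrank K (range (commutatorMap K (A i))) +
        finrank K (Subalgebra.centralizer K {A i}) = Fintype.card n ^ 2 by
      rw [← hM, ← finrank_range_add_finrank_ker (commutatorMap K (A i)), ker_commutatorMap,
        Subalgebra.finrank_toSubmodule]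
  rw [Finset.sum_add_distrib, Finset.sum_const, Finset.card_univ, smul_eq_mul] at hrank
  omega

end CommutatorComplex

theorem four_le_sum_sq {d : ℤ} {m : Fin 4 → ℤ} (hpar : ∀ l, Even (m l - d))
    (hne : ∃ l, m l ≠ 0) : 4 ≤ ∑ l, m l ^ 2 := by
  obtain ⟨j, hj⟩ := hne
  by_cases hd : Even d
  · obtain ⟨k, hk⟩ := (Int.even_sub.1 (hpar j)).2 hd
    have hk0 : k ≠ 0 := by rintro rfl; exact hj (by simpa using hk)
    calc 4 ≤ m j ^ 2 := by
          rw [hk, ← two_mul, mul_pow]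
          nlinarith [(one_le_sq_iff_one_le_abs k).2 (Int.one_le_abs hk0)]
      _ ≤ ∑ l, m l ^ 2 := Finset.single_le_sum (fun l _ => sq_nonneg (m l)) (Finset.mem_univ j)
  · have hodd : ∀ l, m l ≠ 0 := fun l h0 => hd (by simpa [h0] using hpar l)
    calc (4 : ℤ) = ∑ _l : Fin 4, 1 := by simp
      _ ≤ ∑ l, m l ^ 2 := Finset.sum_le_sum fun l _ =>
          (one_le_sq_iff_one_le_abs _).2 (Int.one_le_abs (hodd l))

theorem sum_sq_add_sq_eq_of_exists_ne {d : ℤ} {r s : Fin 4 → ℤ} (hrs : ∀ l, r l + s l = d)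
    (hle : ∑ l, (r l ^ 2 + s l ^ 2) ≤ 2 * d ^ 2 + 2) (hne : ∃ l, r l ≠ s l) :
    ∑ l, (r l ^ 2 + s l ^ 2) = 2 * d ^ 2 + 2 := by
  have hsq : ∀ l, 2 * (r l ^ 2 + s l ^ 2) = d ^ 2 + (r l - s l) ^ 2 := fun l => by
    rw [← hrs l]; ring
  have h4 : 4 ≤ ∑ l, (r l - s l) ^ 2 := by
    refine four_le_sum_sq (d := d) (fun l => ⟨-s l, by rw [← hrs l]; ring⟩) ?_
    obtain ⟨l, hl⟩ := hne
    exact ⟨l, sub_ne_zero.2 hl⟩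
  rw [Fin.sum_univ_four] at hle h4 ⊢
  linarith [hsq 0, hsq 1, hsq 2, hsq 3]

theorem stmt_19_general (d : ℕ) (hd : 1 ≤ d) (P : Fin 4 → Matrix (Fin d) (Fin d) ℂ)
    (hproj : ∀ l, P l * P l = P l)
    (α : Fin 4 → ℝ) (hα : ∀ l, 0 < α l) (lam : ℝ)
    (hsum : (α 0 : ℂ) • P 0 + (α 1 : ℂ) • P 1 + (α 2 : ℂ) • P 2 + (α 3 : ℂ) • P 3 =
      (lam : ℂ) • (1 : Matrix (Fin d) (Fin d) ℂ))
    (hlam : lam ≠ (α 0 + α 1 + α 2 + α 3) / 2)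
    (hirr : ∀ W : Submodule ℂ (Fin d → ℂ),
      (∀ l, ∀ x ∈ W, (P l).mulVec x ∈ W) → W = ⊥ ∨ W = ⊤) :
    (d : ℤ) ^ 2 * (2 - 4) +
      ∑ l : Fin 4,
        (Module.finrank ℂ (Subalgebra.centralizer ℂ {P l} :
          Subalgebra ℂ (Matrix (Fin d) (Fin d) ℂ)) : ℤ) = 2 := by
  have : Nonempty (Fin d) := ⟨⟨0, hd⟩⟩
  have hα0 : ∀ l, (α l : ℂ) ≠ 0 := fun l => Complex.ofReal_ne_zero.2 (hα l).ne'
  have hsum' : ∑ l, (α l : ℂ) • P l = (lam : ℂ) • 1 := by rw [Fin.sum_univ_four]; exact hsum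
  have hbound := sum_finrank_centralizer_add_le (fun l => (α l : ℂ) • P l) hsum'
  rw [(Matrix.IsIrreducibleFamily.smul hirr hα0).centralizer_eq_bot, Subalgebra.finrank_bot]
    at hbound
  have hcent : ∀ l, finrank ℂ (Subalgebra.centralizer ℂ {(α l : ℂ) • P l}) =
      (P l).rank ^ 2 + (1 - P l).rank ^ 2 := fun l => by
    rw [Subalgebra.centralizer_singleton_smul (hα0 l),
      Matrix.finrank_centralizer_of_isIdempotentElem (hproj l)]
  simp only [hcent, Matrix.finrank_centralizer_of_isIdempotentElem (hproj _), Fintype.card_fin]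
    at hbound ⊢
  have hne := Matrix.exists_rank_ne_rank_one_sub hproj hsum'
    (by rw [Fin.sum_univ_four]; exact_mod_cast hlam)
  have hrs : ∀ l, ((P l).rank : ℤ) + (1 - P l).rank = d := fun l => by
    exact_mod_cast
      (Matrix.rank_add_rank_one_sub_of_isIdempotentElem (hproj l)).trans (Fintype.card_fin d)
  have hsq := sum_sq_add_sq_eq_of_exists_ne hrs (by zify at hbound; linarith) (by simpa using hne)
  push_cast
  linarith

theorem stmt_19 (d : ℕ) (hd : 1 ≤ d) (P : Fin 4 → Matrix (Fin d) (Fin d) ℂ)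
    (hsa : ∀ l, (P l).conjTranspose = P l) (hproj : ∀ l, P l * P l = P l)
    (α : Fin 4 → ℝ) (hα : ∀ l, 0 < α l) (lam : ℝ)
    (hsum : (α 0 : ℂ) • P 0 + (α 1 : ℂ) • P 1 + (α 2 : ℂ) • P 2 + (α 3 : ℂ) • P 3 =
      (lam : ℂ) • (1 : Matrix (Fin d) (Fin d) ℂ))
    (hlam : lam ≠ (α 0 + α 1 + α 2 + α 3) / 2)
    (hirr : ∀ W : Submodule ℂ (Fin d → ℂ),
      (∀ l, ∀ x ∈ W, (P l).mulVec x ∈ W) → W = ⊥ ∨ W = ⊤) :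
    (d : ℤ) ^ 2 * (2 - 4) +
      ∑ l : Fin 4,
        (Module.finrank ℂ (Subalgebra.centralizer ℂ {P l} :
          Subalgebra ℂ (Matrix (Fin d) (Fin d) ℂ)) : ℤ) = 2 :=
  stmt_19_general d hd P hproj α hα lam hsum hlam hirr
end
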